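/- arXiv:2407.10401 — 10 statements merged into one kernel-verified Lean document; each statement's English description precedes it below -/
import Mathlib

section
/- (Bundling Lemma) For any feasible solution x* to an instance of the average-value allocation problem (AVA), there exists a bundling-based solution x̂ (a solution partitionable into permissible bundles) whose total value v·x̂ satisfies v·x̂ ≥ (1/2)·v·x*. -/
variable {I J : Type*} [Fintype I] [Fintype J] [DecidableEq I] [DecidableEq J]

/-- Feasibility of an allocation for an AVA instance: each buyer's total value
is at least `ρ j` times the number of items allocated to them. -/
def Feasible (v : I → J → ℝ) (ρ : J → ℝ) (x : I → Option J) : Prop :=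
  ∀ j : J, ρ j * ((Finset.univ.filter fun i => x i = some j).card : ℝ) ≤
    ∑ i ∈ Finset.univ.filter fun i => x i = some j, v i j

/-- The social welfare (total value) of an allocation. -/
def totalValue (v : I → J → ℝ) (x : I → Option J) : ℝ :=
  ∑ i, ((x i).map (v i)).getD 0

/-- A bundling-based solution: the allocated edges can be partitioned into
permissible bundles, each consisting of a single P-edge `(g i, j)`
(with `v (g i) j ≥ ρ j`) together with zero or more N-edges, jointly
satisfying the average-value constraint. The map `g` sends every allocated
item to the P-item of its bundle. -/
def BundlingBased (v : I → J → ℝ) (ρ : J → ℝ) (x : I → Option J) : Prop :=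
  ∃ g : I → I,
    (∀ i j, x i = some j →
      x (g i) = some j ∧ ρ j ≤ v (g i) j ∧ g (g i) = g i ∧ (g i ≠ i → v i j < ρ j)) ∧
    (∀ j p, x p = some j → g p = p →
      ρ j * ((Finset.univ.filter fun i => x i = some j ∧ g i = p).card : ℝ) ≤
        ∑ i ∈ Finset.univ.filter fun i => x i = some j ∧ g i = p, v i j)

/-!
Fix a buyer with threshold `r` and split its items into P-items (`r ≤ w`) and N-items
(`w < r`). Feasibility says that the total deficit `r - w` of the N-items is at most the total
surplus `w - r` of the P-items, so the N-items can be packed into the P-items as into bins,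
except for at most one dropped N-item per bin: place the smallest remaining deficit into any
bin with room for it; when no bin has room, every bin has less room than the smallest deficit,
which forces fewer remaining items than bins. A bin together with its N-items is a permissible
bundle, and the dropped items are worth less than `r` each, so their value is at most
`r * #P`, which is at most the value of what is kept.
-/

open Finset

section Packing

variable {ι : Type*} [DecidableEq ι]

theorem sum_filter_update_insert_le {d s : ι → ℝ} {K P : Finset ι} {f : ι → ι} {m₀ p₀ : ι}
    (hm₀ : m₀ ∉ K)
    (hload : ∀ p ∈ P, ∑ m ∈ K with f m = p, d m ≤ Function.update s p₀ (s p₀ - d m₀) p) :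
    ∀ p ∈ P, ∑ m ∈ insert m₀ K with Function.update f m₀ p₀ m = p, d m ≤ s p := by
  intro p hp
  have hK : ∑ m ∈ K with Function.update f m₀ p₀ m = p, d m = ∑ m ∈ K with f m = p, d m := by
    refine sum_congr (filter_congr fun m hm => ?_) fun _ _ => rfl
    rw [Function.update_of_ne (ne_of_mem_of_not_mem hm hm₀)]
  have := hload p hp
  rw [filter_insert, Function.update_self]
  split_ifs at this ⊢ with h
  · subst h
    rw [sum_insert (fun h => hm₀ (mem_filter.1 h).1), hK]
    simp only [Function.update_self] at this
    linarith
  · rw [hK]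
    rwa [Function.update_of_ne (Ne.symm h)] at this

theorem exists_packing_of_sum_le (d s : ι → ℝ) (P N : Finset ι) (hs : ∀ p ∈ P, 0 ≤ s p)
    (hd : ∀ m ∈ N, 0 < d m) (hsum : ∑ m ∈ N, d m ≤ ∑ p ∈ P, s p) :
    ∃ K ⊆ N, ∃ f : ι → ι, (∀ m ∈ K, f m ∈ P) ∧
      (∀ p ∈ P, ∑ m ∈ K with f m = p, d m ≤ s p) ∧ #(N \ K) ≤ #P := by
  induction N using Finset.strongInduction generalizing s with
  | H N ih =>
  rcases N.eq_empty_or_nonempty with rfl | hN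
  · exact ⟨∅, empty_subset _, id, by simp, by simpa using hs, by simp⟩
  obtain ⟨m₀, hm₀, hmin⟩ := N.exists_min_image d hN
  by_cases hfit : ∃ p ∈ P, d m₀ ≤ s p
  · obtain ⟨p₀, hp₀, hfit⟩ := hfit
    have hs' : ∀ p ∈ P, 0 ≤ Function.update s p₀ (s p₀ - d m₀) p := by
      intro p hp
      rw [Function.update_apply]
      split_ifs <;> linarith [hs p hp]
    have hsum' : ∑ m ∈ N.erase m₀, d m ≤ ∑ p ∈ P, Function.update s p₀ (s p₀ - d m₀) p := by
      rw [sum_update_of_mem hp₀, ← erase_eq]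
      linarith [add_sum_erase P s hp₀, add_sum_erase N d hm₀]
    obtain ⟨K, hK, f, hf, hload, hdrop⟩ := ih _ (erase_ssubset hm₀) _ hs'
      (fun m hm => hd m (mem_of_mem_erase hm)) hsum'
    have hm₀K : m₀ ∉ K := fun h => notMem_erase m₀ N (hK h)
    refine ⟨insert m₀ K, insert_subset hm₀ (hK.trans (erase_subset _ _)),
      Function.update f m₀ p₀, ?_, sum_filter_update_insert_le hm₀K hload, ?_⟩
    · intro m hm
      rw [Function.update_apply]
      split_ifs with h
      · exact hp₀
      · exact hf m ((mem_insert.1 hm).resolve_left h)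
    · rwa [sdiff_insert, ← erase_sdiff_comm]
  · push Not at hfit
    have hcard : #N * d m₀ ≤ #P * d m₀ := by
      calc #N * d m₀ ≤ ∑ m ∈ N, d m := by simpa using card_nsmul_le_sum N d _ hmin
        _ ≤ ∑ p ∈ P, s p := hsum
        _ ≤ #P * d m₀ := by simpa using sum_le_card_nsmul P s _ fun p hp => (hfit p hp).le
    refine ⟨∅, empty_subset _, id, by simp, by simpa using hs, ?_⟩
    simpa using le_of_mul_le_mul_right hcard (hd m₀ hm₀)

end Packing

theorem sum_deficit_le_sum_surplus {ι : Type*} (w : ι → ℝ) (r : ℝ) (S : Finset ι)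
    (hS : r * #S ≤ ∑ i ∈ S, w i) :
    ∑ i ∈ S with w i < r, (r - w i) ≤ ∑ i ∈ S with r ≤ w i, (w i - r) := by
  have hsplit := sum_filter_add_sum_filter_not S (fun i => w i < r) (fun i => w i - r)
  simp only [not_lt, sum_sub_distrib (s := S), sum_const, nsmul_eq_mul] at hsplit
  have hneg : ∑ i ∈ S with w i < r, (r - w i) = -∑ i ∈ S with w i < r, (w i - r) := by
    simp only [← sum_neg_distrib, neg_sub]
  linarith

section Bundling

variable {ι : Type*} [DecidableEq ι]

/-- The fibres of `g` over its fixed points in `T` are permissible bundles for a buyer with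
values `w` and threshold `r`, the fixed point being the bundle's P-item. -/
def IsBundling (w : ι → ℝ) (r : ℝ) (T : Finset ι) (g : ι → ι) : Prop :=
  (∀ i ∈ T, g i ∈ T ∧ r ≤ w (g i) ∧ g (g i) = g i ∧ (g i ≠ i → w i < r)) ∧
    ∀ p ∈ T, g p = p → r * #{i ∈ T | g i = p} ≤ ∑ i ∈ T with g i = p, w i

variable {w : ι → ℝ} {r : ℝ} {S T : Finset ι} {g : ι → ι}

theorem IsBundling.congr {g' : ι → ι} (h : IsBundling w r T g) (hg : Set.EqOn g g' T) :
    IsBundling w r T g' := by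
  obtain ⟨hmem, hbundle⟩ := h
  have hfib : ∀ p, {i ∈ T | g' i = p} = {i ∈ T | g i = p} :=
    fun p => filter_congr fun i hi => by rw [hg hi]
  refine ⟨fun i hi => ?_, fun p hp hgp => ?_⟩
  · obtain ⟨hgi, hval, hidem, hN⟩ := hmem i hi
    rw [← hg hi, ← hg hgi]
    exact ⟨hgi, hval, hidem, hN⟩
  · rw [hfib]
    exact hbundle p hp (by rw [hg hp, hgp])

theorem IsBundling.mul_card_le_sum (h : IsBundling w r T g) :
    r * #T ≤ ∑ i ∈ T, w i := by
  have hmaps : ∀ i ∈ T, g i ∈ T.image g := fun i hi => mem_image_of_mem g hi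
  rw [card_eq_sum_card_fiberwise hmaps, ← sum_fiberwise_of_maps_to hmaps, Nat.cast_sum, mul_sum]
  refine sum_le_sum fun p hp => ?_
  obtain ⟨i, hi, rfl⟩ := mem_image.1 hp
  exact h.2 (g i) (h.1 i hi).1 (h.1 i hi).2.2.1

theorem isBundling_piecewise_of_packing {P K : Finset ι} {f : ι → ι}
    (hP : ∀ p ∈ P, r ≤ w p) (hK : ∀ m ∈ K, w m < r) (hf : ∀ m ∈ K, f m ∈ P)
    (hload : ∀ p ∈ P, ∑ m ∈ K with f m = p, (r - w m) ≤ w p - r) :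
    IsBundling w r (P ∪ K) (K.piecewise f id) := by
  have hPK : ∀ p ∈ P, p ∉ K := fun p hp hpK => (hK p hpK).not_ge (hP p hp)
  have hgP : ∀ p ∈ P, K.piecewise f id p = p := fun p hp => piecewise_eq_of_notMem _ _ _ (hPK p hp)
  refine ⟨fun i hi => ?_, fun p hp hgp => ?_⟩
  · rcases mem_union.1 hi with hiP | hiK
    · rw [hgP i hiP]
      exact ⟨hi, hP i hiP, hgP i hiP, fun h => (h rfl).elim⟩
    · rw [piecewise_eq_of_mem _ _ _ hiK]
      exact ⟨mem_union_left _ (hf i hiK), hP _ (hf i hiK), hgP _ (hf i hiK), fun _ => hK i hiK⟩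
  have hpP : p ∈ P := by
    rcases mem_union.1 hp with hpP | hpK
    · exact hpP
    · rw [piecewise_eq_of_mem _ _ _ hpK] at hgp
      exact hgp ▸ hf p hpK
  have hfib : {i ∈ P ∪ K | K.piecewise f id i = p} = insert p {m ∈ K | f m = p} := by
    ext i
    by_cases hiK : i ∈ K
    · have hip : i ≠ p := fun h => hPK p hpP (h ▸ hiK)
      simp [hiK, hip]
    · simp only [mem_filter, mem_union, mem_insert, piecewise_eq_of_notMem _ _ _ hiK, hiK, id]
      constructor
      · exact fun h => Or.inl h.2
      · rintro (rfl | ⟨⟨⟩, _⟩)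
        exact ⟨Or.inl hpP, rfl⟩
  have hp_notMem : p ∉ {m ∈ K | f m = p} := fun h => hPK p hpP (mem_filter.1 h).1
  rw [hfib, sum_insert hp_notMem, card_insert_of_notMem hp_notMem]
  have := hload p hpP
  rw [sum_sub_distrib, sum_const, nsmul_eq_mul] at this
  push_cast
  linarith

theorem exists_isBundling_sum_le_two_mul (hr : 0 ≤ r) (hS : r * #S ≤ ∑ i ∈ S, w i) :
    ∃ T ⊆ S, ∃ g, IsBundling w r T g ∧ ∑ i ∈ S, w i ≤ 2 * ∑ i ∈ T, w i := by
  set P := S.filter fun i => r ≤ w i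
  set N := S.filter fun i => w i < r
  have hP : ∀ p ∈ P, r ≤ w p := fun p hp => (mem_filter.1 hp).2
  have hN : ∀ m ∈ N, w m < r := fun m hm => (mem_filter.1 hm).2
  obtain ⟨K, hKN, f, hf, hload, hdrop⟩ := exists_packing_of_sum_le (fun m => r - w m)
    (fun p => w p - r) P N (fun p hp => sub_nonneg.2 (hP p hp))
    (fun m hm => sub_pos.2 (hN m hm)) (sum_deficit_le_sum_surplus w r S hS)
  have hT := isBundling_piecewise_of_packing hP (fun m hm => hN m (hKN hm)) hf hload
  refine ⟨P ∪ K, union_subset (filter_subset _ _) (hKN.trans (filter_subset _ _)), _, hT, ?_⟩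
  have hPK : Disjoint P K := disjoint_left.2 fun p hp hpK => (hN p (hKN hpK)).not_ge (hP p hp)
  have hdropped : ∑ i ∈ N \ K, w i ≤ ∑ i ∈ P ∪ K, w i :=
    calc ∑ i ∈ N \ K, w i ≤ #(N \ K) * r := by
          simpa using sum_le_card_nsmul _ w r fun m hm => (hN m (mem_sdiff.1 hm).1).le
      _ ≤ #(P ∪ K) * r := mul_le_mul_of_nonneg_right
          (by exact_mod_cast hdrop.trans (card_le_card subset_union_left)) hr
      _ = r * #(P ∪ K) := mul_comm _ _
      _ ≤ ∑ i ∈ P ∪ K, w i := hT.mul_card_le_sum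
  have hS_split : ∑ i ∈ S, w i = ∑ i ∈ P ∪ K, w i + ∑ i ∈ N \ K, w i := by
    have hPN : ∑ i ∈ S, w i = ∑ i ∈ P, w i + ∑ i ∈ N, w i := by
      rw [← sum_filter_add_sum_filter_not S (fun i => r ≤ w i)]
      simp only [not_le, P, N]
    rw [hPN, sum_union hPK, ← sum_sdiff hKN]
    ring
  linarith

end Bundling

theorem totalValue_eq_sum_sum_filter {ι κ : Type*} [Fintype ι] [Fintype κ] [DecidableEq κ]
    (v : ι → κ → ℝ) (x : ι → Option κ) :
    totalValue v x = ∑ j, ∑ i with x i = some j, v i j := by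
  unfold totalValue
  simp_rw [sum_filter]
  rw [sum_comm]
  refine sum_congr rfl fun i _ => ?_
  cases x i <;> simp

theorem bundlingBased_of_isBundling {ι κ : Type*} [Fintype ι] [DecidableEq ι] [DecidableEq κ]
    {v : ι → κ → ℝ} {ρ : κ → ℝ} {x : ι → Option κ} (g : ι → ι)
    (h : ∀ j, IsBundling (v · j) (ρ j) {i | x i = some j} g) : BundlingBased v ρ x := by
  refine ⟨g, fun i j hij => ?_, fun j p hp hgp => ?_⟩
  · simpa using (h j).1 i (by simpa using hij)
  · simpa only [filter_filter] using (h j).2 p (by simpa using hp) hgp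

theorem stmt_2_general (v : I → J → ℝ) (ρ : J → ℝ) (hρ : ∀ j, 0 ≤ ρ j)
    (xstar : I → Option J) (hfeas : Feasible v ρ xstar) :
    ∃ xhat : I → Option J, Feasible v ρ xhat ∧ BundlingBased v ρ xhat ∧
      (1 / 2) * totalValue v xstar ≤ totalValue v xhat := by
  choose T hTS G hG hhalf using fun j => exists_isBundling_sum_le_two_mul (hρ j) (hfeas j)
  have hxT : ∀ j, ∀ i ∈ T j, xstar i = some j := fun j i hi => (mem_filter.1 (hTS j hi)).2
  set xhat : I → Option J := fun i => (xstar i).filter fun j => i ∈ T j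
  have hfib : ∀ j, ({i | xhat i = some j} : Finset I) = T j := by
    intro j
    ext i
    simpa [xhat, Option.filter_eq_some_iff] using hxT j i
  refine ⟨xhat, fun j => ?_, bundlingBased_of_isBundling (fun i => (xstar i).elim i (G · i))
    fun j => ?_, ?_⟩
  · rw [hfib]
    exact (hG j).mul_card_le_sum
  · rw [hfib]
    exact (hG j).congr fun i hi => by simp [hxT j i hi]
  · rw [totalValue_eq_sum_sum_filter, totalValue_eq_sum_sum_filter, mul_sum]
    refine sum_le_sum fun j _ => ?_
    rw [hfib]
    linarith [hhalf j]

/-- Bundling Lemma: any feasible AVA solution admits a bundling-based solution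
of at least half its value. -/
theorem stmt_2 (v : I → J → ℝ) (ρ : J → ℝ)
    (hv : ∀ i j, 0 ≤ v i j) (hρ : ∀ j, 0 ≤ ρ j)
    (xstar : I → Option J) (hfeas : Feasible v ρ xstar) :
    ∃ xhat : I → Option J, Feasible v ρ xhat ∧ BundlingBased v ρ xhat ∧
      (1 / 2) * totalValue v xstar ≤ totalValue v xhat :=
  stmt_2_general v ρ hρ xstar hfeas
end

section
/- (Tightness of the bundling factor 2) For every δ > 0 there exists a single-buyer AVA instance with ρ = 1 such that the optimal feasible solution has value V, but every bundling-based solution has value at most (1/2 + δ)·V. Concretely, for ε > 0 small, the instance with 1/ε items of value 1−ε and 1/(ε(1−ε)) items of value 1+ε(1−ε) admits a feasible allocation of all items, yet in any permissible bundle containing a P-edge of value 1+ε(1−ε), no N-edge of value 1−ε can be included (since ε(1−ε) < ε). -/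
/-- Single-buyer AVA feasibility with threshold `ρ = 1`. -/
def sbFeasible {n : ℕ} (v : Fin n → ℝ) (S : Finset (Fin n)) : Prop :=
  (S.card : ℝ) ≤ ∑ i ∈ S, v i

/-- A permissible bundle: exactly one P-item (value `≥ 1`), all other items
N-items (value `< 1`), satisfying the average-value constraint. -/
def sbPermissible {n : ℕ} (v : Fin n → ℝ) (B : Finset (Fin n)) : Prop :=
  (∃ p ∈ B, 1 ≤ v p ∧ ∀ i ∈ B, i ≠ p → v i < 1) ∧ (B.card : ℝ) ≤ ∑ i ∈ B, v i

/-- A bundling-based solution: a disjoint union of permissible bundles. -/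
def sbBundling {n : ℕ} (v : Fin n → ℝ) (S : Finset (Fin n)) : Prop :=
  ∃ Ps : Finset (Finset (Fin n)), (∀ B ∈ Ps, sbPermissible v B) ∧
    (Ps : Set (Finset (Fin n))).PairwiseDisjoint id ∧ S = Ps.sup id

lemma sum_range_ite_aux (a b : ℝ) (k N : ℕ) (hk : k ≤ N) :
    ∑ i ∈ Finset.range N, (if i < k then a else b) = k * a + ((N - k : ℕ) : ℝ) * b := by
  rw [Finset.sum_ite]
  have h1 : (Finset.range N).filter (fun i => i < k) = Finset.range k := by
    ext i; simp only [Finset.mem_filter, Finset.mem_range]; omega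
  have h2 : (Finset.range N).filter (fun i => ¬ i < k) = Finset.Ico k N := by
    ext i; simp only [Finset.mem_filter, Finset.mem_range, Finset.mem_Ico]; omega
  rw [h1, h2]
  simp [Finset.sum_const, nsmul_eq_mul, Nat.card_Ico]

/-- Tightness of the factor 2 in the Bundling Lemma: for every `δ > 0` there is
a single-buyer unit-`ρ` AVA instance whose optimum has value `V`, while every
bundling-based solution has value at most `(1/2 + δ)·V`. -/
theorem stmt_3 : ∀ δ : ℝ, 0 < δ →
    ∃ (n : ℕ) (v : Fin n → ℝ) (V : ℝ), 0 < V ∧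
      (∃ S : Finset (Fin n), sbFeasible v S ∧ ∑ i ∈ S, v i = V) ∧
      (∀ S : Finset (Fin n), sbFeasible v S → ∑ i ∈ S, v i ≤ V) ∧
      (∀ S : Finset (Fin n), sbBundling v S → ∑ i ∈ S, v i ≤ (1 / 2 + δ) * V) := by
  intro δ hδ
  -- choose k with 2 ≤ k and δ * (2k-1) ≥ 3
  obtain ⟨k, hk2, hkδ⟩ : ∃ k : ℕ, 2 ≤ k ∧ 3 ≤ δ * (2 * (k : ℝ) - 1) := by
    refine ⟨⌈3 / δ⌉₊ + 2, by omega, ?_⟩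
    have h1 : 3 / δ ≤ (⌈3 / δ⌉₊ : ℝ) := Nat.le_ceil _
    have h2 : 3 ≤ δ * (⌈3 / δ⌉₊ : ℝ) := by
      rw [div_le_iff₀ hδ] at h1; linarith
    have h3 : (0 : ℝ) ≤ (⌈3 / δ⌉₊ : ℝ) := by positivity
    push_cast
    nlinarith
  set K : ℝ := (k : ℝ) with hKdef
  have hK2 : (2 : ℝ) ≤ K := by rw [hKdef]; exact_mod_cast hk2
  have hK0 : (0 : ℝ) < K := by linarith
  set a : ℝ := 1 + (K - 1) / K ^ 2 with ha
  set b : ℝ := 1 - 1 / K with hb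
  have hb0 : 0 ≤ b := by
    have : 1 / K ≤ 1 / 2 := one_div_le_one_div_of_le (by norm_num) hK2
    simp only [hb]; linarith
  have ha1 : 1 ≤ a := by
    have : 0 ≤ (K - 1) / K ^ 2 := div_nonneg (by linarith) (by positivity)
    simp only [ha]; linarith
  have hb1 : b < 1 := by
    have : 0 < 1 / K := by positivity
    simp only [hb]; linarith
  refine ⟨2 * k - 1, fun i => if (i : ℕ) < k then a else b, 2 * K - 1, by linarith, ?_, ?_, ?_⟩
  · -- full set is feasible with value 2K - 1
    refine ⟨Finset.univ, ?_, ?_⟩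
    · unfold sbFeasible
      rw [Fin.sum_univ_eq_sum_range (fun i => if i < k then a else b) (2 * k - 1),
        sum_range_ite_aux a b k (2 * k - 1) (by omega)]
      have hc : (2 * k - 1 - k : ℕ) = k - 1 := by omega
      have h1 : ((2 * k - 1 : ℕ) : ℝ) = 2 * K - 1 := by
        have : (1 : ℕ) ≤ 2 * k := by omega
        push_cast [Nat.cast_sub this]; ring
      have h2 : ((k - 1 : ℕ) : ℝ) = K - 1 := by
        have : (1 : ℕ) ≤ k := by omega
        push_cast [Nat.cast_sub this]; ring
      rw [Finset.card_univ, Fintype.card_fin, hc, h1, h2]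
      have heq : K * a + (K - 1) * b = 2 * K - 1 := by
        simp only [ha, hb]; field_simp; ring
      linarith [heq]
    · rw [Fin.sum_univ_eq_sum_range (fun i => if i < k then a else b) (2 * k - 1),
        sum_range_ite_aux a b k (2 * k - 1) (by omega)]
      have hc : (2 * k - 1 - k : ℕ) = k - 1 := by omega
      have h2 : ((k - 1 : ℕ) : ℝ) = K - 1 := by
        have : (1 : ℕ) ≤ k := by omega
        push_cast [Nat.cast_sub this]; ring
      rw [hc, h2]
      simp only [ha, hb]; field_simp; ring
  · -- any feasible set has value at most V
    intro S _
    have hsub : ∑ i ∈ S, (fun i : Fin (2 * k - 1) => if (i : ℕ) < k then a else b) i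
        ≤ ∑ i ∈ Finset.univ, (fun i : Fin (2 * k - 1) => if (i : ℕ) < k then a else b) i := by
      apply Finset.sum_le_sum_of_subset_of_nonneg (Finset.subset_univ S)
      intro i _ _
      by_cases h : (i : ℕ) < k <;> simp [h] <;> linarith
    have htot : ∑ i ∈ Finset.univ, (fun i : Fin (2 * k - 1) => if (i : ℕ) < k then a else b) i
        = 2 * K - 1 := by
      rw [Fin.sum_univ_eq_sum_range (fun i => if i < k then a else b) (2 * k - 1),
        sum_range_ite_aux a b k (2 * k - 1) (by omega)]
      have hc : (2 * k - 1 - k : ℕ) = k - 1 := by omega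
      have h2 : ((k - 1 : ℕ) : ℝ) = K - 1 := by
        have : (1 : ℕ) ≤ k := by omega
        push_cast [Nat.cast_sub this]; ring
      rw [hc, h2]
      simp only [ha, hb]; field_simp; ring
    calc ∑ i ∈ S, (if (i : ℕ) < k then a else b) ≤ _ := hsub
    _ = 2 * K - 1 := htot
  · -- bundling bound
    intro S hSb
    obtain ⟨Ps, hperm, _, hS⟩ := hSb
    -- every element of S is a P-item
    have hkey : ∀ i ∈ S, (i : ℕ) < k := by
      intro i hi
      rw [hS, Finset.mem_sup] at hi
      obtain ⟨B, hBPs, hiB⟩ := hi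
      obtain ⟨⟨p, hpB, hp1, hother⟩, hcard⟩ := hperm B hBPs
      have hp1' : 1 ≤ (if (p : ℕ) < k then a else b) := hp1
      have hother' : ∀ x ∈ B, x ≠ p → (if (x : ℕ) < k then a else b) < 1 := hother
      have hcard' : (B.card : ℝ) ≤ ∑ x ∈ B, (if (x : ℕ) < k then a else b) := hcard
      -- p is a P-item
      have hpk : (p : ℕ) < k := by
        by_contra h
        rw [if_neg h] at hp1'; linarith
      -- all other elements of B are N-items
      have hNk : ∀ j ∈ B.erase p, ¬ (j : ℕ) < k := by
        intro j hj
        have hjp := Finset.ne_of_mem_erase hj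
        have hjB := Finset.mem_of_mem_erase hj
        have := hother' j hjB hjp
        by_contra h
        rw [if_pos h] at this; linarith
      -- compute the sum over B
      have hsumB : ∑ x ∈ B, (if (x : ℕ) < k then a else b)
          = a + ((B.erase p).card : ℝ) * b := by
        rw [← Finset.add_sum_erase _ _ hpB, if_pos hpk]
        congr 1
        rw [Finset.sum_congr rfl (fun j hj => if_neg (hNk j hj)), Finset.sum_const,
          nsmul_eq_mul]
      set j : ℕ := (B.erase p).card with hjdef
      have hcardB : B.card = j + 1 := by
        rw [hjdef, Finset.card_erase_of_mem hpB]
        have : 1 ≤ B.card := Finset.card_pos.mpr ⟨p, hpB⟩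
        omega
      rw [hsumB, hcardB] at hcard'
      push_cast at hcard'
      -- hcard' : j + 1 ≤ a + j * b
      have hKne : K ≠ 0 := ne_of_gt hK0
      have he : a + (j : ℝ) * b = 1 + (K - 1) / K ^ 2 + (j : ℝ) - (j : ℝ) / K := by
        simp only [ha, hb]; ring
      rw [he] at hcard'
      have h0 : (j : ℝ) / K ≤ (K - 1) / K ^ 2 := by linarith
      rw [div_le_div_iff₀ hK0 (by positivity)] at h0
      -- h0 : j * K ^ 2 ≤ (K - 1) * K
      have hj0 : j = 0 := by
        by_contra h
        have h1 : (1 : ℝ) ≤ (j : ℝ) := by exact_mod_cast Nat.one_le_iff_ne_zero.mpr h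
        nlinarith [mul_nonneg (by linarith : (0:ℝ) ≤ (j : ℝ) - 1) (sq_nonneg K), hK0, h0]
      have hBp : B = {p} := by
        have : B.erase p = ∅ := Finset.card_eq_zero.mp hj0
        have hsub : B ⊆ {p} := by
          intro x hx
          rcases eq_or_ne x p with rfl | hne
          · simp
          · exact absurd (Finset.mem_erase.mpr ⟨hne, hx⟩) (by simp [this])
        exact Finset.Subset.antisymm hsub (Finset.singleton_subset_iff.mpr hpB)
      rw [hBp] at hiB
      simp only [id_eq, Finset.mem_singleton] at hiB
      rw [hiB]; exact hpk
    -- so S is contained in the set of P-items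
    have hsub : S ⊆ Finset.univ.filter (fun i : Fin (2 * k - 1) => (i : ℕ) < k) := by
      intro i hi
      exact Finset.mem_filter.mpr ⟨Finset.mem_univ i, hkey i hi⟩
    have h1 : ∑ i ∈ S, (if (i : ℕ) < k then a else b)
        ≤ ∑ i ∈ Finset.univ.filter (fun i : Fin (2 * k - 1) => (i : ℕ) < k),
            (if (i : ℕ) < k then a else b) := by
      apply Finset.sum_le_sum_of_subset_of_nonneg hsub
      intro i _ _
      by_cases h : (i : ℕ) < k <;> simp [h] <;> linarith
    have h2 : ∑ i ∈ Finset.univ.filter (fun i : Fin (2 * k - 1) => (i : ℕ) < k),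
        (if (i : ℕ) < k then a else b) = K * a := by
      rw [Finset.sum_filter]
      have hcongr : ∀ i : Fin (2 * k - 1),
          (if (i : ℕ) < k then (if (i : ℕ) < k then a else b) else 0)
          = (if (i : ℕ) < k then a else 0) := by
        intro i; by_cases h : (i : ℕ) < k <;> simp [h]
      rw [Finset.sum_congr rfl (fun i _ => hcongr i),
        Fin.sum_univ_eq_sum_range (fun i => if i < k then a else 0) (2 * k - 1),
        sum_range_ite_aux a 0 k (2 * k - 1) (by omega)]
      ring
    have hfinal : K * a ≤ (1 / 2 + δ) * (2 * K - 1) := by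
      have hd1 : (K - 1) / K ≤ 1 := by
        rw [div_le_one hK0]; linarith
      have : K * a = K + (K - 1) / K := by
        simp only [ha]; field_simp
      rw [this]
      nlinarith
    calc ∑ i ∈ S, (if (i : ℕ) < k then a else b) ≤ _ := h1
    _ = K * a := h2
    _ ≤ (1 / 2 + δ) * (2 * K - 1) := hfinal
end

section
/- (Supply Lemma) Let I be an AVA instance and let I' be the instance obtained from I by making k copies of every item (same values and thresholds). Then OPT(I') ≤ O(k²)·OPT(I). Concretely, OPT(I') ≤ 2k²·OPT(I): given an optimal bundling-based allocation for I' (which 2-approximates OPT(I')), independently associating each original item uniformly with one of its k copies and keeping only bundles whose surviving items are exactly as allocated yields a feasible allocation for I with expected value at least (1/k²) times the value of the bundling-based allocation. -/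
variable {I J : Type*} [Fintype I] [Fintype J] [DecidableEq I] [DecidableEq J]

/-- Feasibility of an allocation for an AVA instance with item set `α`,
values `w : α → J → ℝ` and thresholds `ρ`. -/
def FeasibleOn {α : Type*} [Fintype α] [DecidableEq α]
    (w : α → J → ℝ) (ρ : J → ℝ) (x : α → Option J) : Prop :=
  ∀ j : J, ρ j * ((Finset.univ.filter fun a => x a = some j).card : ℝ) ≤
    ∑ a ∈ Finset.univ.filter fun a => x a = some j, w a j

/-- Total value of an allocation. -/
def valueOn {α : Type*} [Fintype α] (w : α → J → ℝ) (x : α → Option J) : ℝ :=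
  ∑ a, ((x a).map (w a)).getD 0

/-!
Split the copies allocated to a buyer `j` into high copies (value at least `ρ j`) and low ones.
Hanging the low copies greedily onto high anchors, so that the surplus of each anchor covers
the deficits of its bundle, leaves at most one low copy per anchor unplaced, worth less than
the anchor: the bundles keep at least half of the value, and each bundle stays feasible when
any of its low copies are removed. Now pick one copy `f i` of every item and give `i` to the
buyer of `(i, f i)` whenever the anchor of its bundle is a picked copy too. Every such rounding
is feasible, since what survives of a bundle contains its anchor. Two copies of one item never
share a bundle (the second would be worth as much as the anchor, so it would be high), hence a
bundled copy survives for at least a `1 / k²` fraction of the `k ^ |I|` choices of `f`, and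
averaging over `f` gives the factor `2 k²`.
-/

open Finset

lemma sum_sub_le_sum_sub_of_mul_card_le_sum {S : Type*} {u : S → ℝ} {r : ℝ} {A : Finset S}
    (hA : r * #A ≤ ∑ s ∈ A, u s) :
    ∑ s ∈ A with ¬ r ≤ u s, (r - u s) ≤ ∑ s ∈ A with r ≤ u s, (u s - r) := by
  have hsplit := sum_filter_add_sum_filter_not A (fun s => r ≤ u s) (fun s => u s - r)
  have hneg : ∑ s ∈ A with ¬ r ≤ u s, (r - u s) = -∑ s ∈ A with ¬ r ≤ u s, (u s - r) := by
    rw [← sum_neg_distrib]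
    simp
  have hA' : 0 ≤ ∑ s ∈ A, (u s - r) := by
    rw [sum_sub_distrib, sum_const, nsmul_eq_mul]
    linarith
  linarith

section Bundling

variable {S : Type*} [DecidableEq S]

lemma exists_subset_sum_le_lt_add (d : S → ℝ) {c : ℝ} (hc : 0 ≤ c) (N : Finset S)
    (h : c < ∑ s ∈ N, d s) :
    ∃ M ⊆ N, ∃ n ∈ N \ M, ∑ s ∈ M, d s ≤ c ∧ c < ∑ s ∈ M, d s + d n := by
  induction N using Finset.induction_on with
  | empty => simp at h; linarith
  | insert a N ha ih =>
    by_cases hN : c < ∑ s ∈ N, d s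
    · obtain ⟨M, hMN, n, hn, hM⟩ := ih hN
      exact ⟨M, hMN.trans (subset_insert a N), n,
        sdiff_subset_sdiff (subset_insert a N) le_rfl hn, hM⟩
    · rw [sum_insert ha] at h
      exact ⟨N, subset_insert a N, a, by simp [ha], not_lt.1 hN, by linarith⟩

/-- `g s = some p` hangs `s` onto `p`; `g s = none` drops `s`. -/
structure IsAssignment (u : S → ℝ) (r : ℝ) (P N : Finset S) (g : S → Option S) : Prop where
  mem : ∀ {s p}, g s = some p → s ∈ N ∧ p ∈ P
  deficit_le : ∀ p ∈ P, ∑ s ∈ N with g s = some p, (r - u s) ≤ u p - r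
  dropped_le : ∑ s ∈ N with g s = none, u s ≤ ∑ p ∈ P, u p

lemma IsAssignment.extend {u : S → ℝ} {r : ℝ} {P N M N' : Finset S} {p : S}
    {g : S → Option S} (hg : IsAssignment u r P N' g) (hp : p ∉ P) (hMN : M ⊆ N)
    (hN' : N' ⊆ N \ M) (hM : ∑ s ∈ M, (r - u s) ≤ u p - r)
    (hdropped : ∑ s ∈ (N \ M) \ N', u s ≤ u p) :
    IsAssignment u r (insert p P) N (fun s => if s ∈ M then some p else g s) where
  mem {s q} h := by
    split_ifs at h with hs
    · cases h; exact ⟨hMN hs, mem_insert_self _ _⟩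
    · exact ⟨(mem_sdiff.1 (hN' (hg.mem h).1)).1, mem_insert_of_mem (hg.mem h).2⟩
  deficit_le q hq := by
    rcases mem_insert.1 hq with rfl | hqP
    · convert hM using 2
      ext s
      have : g s ≠ some q := fun h => hp (hg.mem h).2
      by_cases hs : s ∈ M
      · simp [hs, hMN hs]
      · simp [hs, this]
    · have hqp : q ≠ p := by rintro rfl; exact hp hqP
      convert hg.deficit_le q hqP using 2
      ext s
      by_cases hs : s ∈ M
      · have : s ∉ N' := fun h => (mem_sdiff.1 (hN' h)).2 hs
        simp [hs, this, hqp.symm]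
      · simp only [mem_filter, hs, if_false]
        exact ⟨fun ⟨_, h⟩ => ⟨(hg.mem h).1, h⟩, fun ⟨h₁, h⟩ => ⟨(mem_sdiff.1 (hN' h₁)).1, h⟩⟩
  dropped_le := by
    have hsplit : {s ∈ N | (if s ∈ M then some p else g s) = none}
        = (N \ M) \ N' ∪ {s ∈ N' | g s = none} := by
      ext s
      have := fun q (h : g s = some q) => (hg.mem h).1
      have := @hN' s
      by_cases hs : s ∈ M <;> by_cases hs' : s ∈ N' <;> cases hgs : g s <;> simp_all
    rw [hsplit, sum_union (disjoint_sdiff_self_left.mono_right (filter_subset _ _)),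
      sum_insert hp]
    exact add_le_add hdropped hg.dropped_le

theorem exists_isAssignment (u : S → ℝ) {r : ℝ} (hr : 0 ≤ r) (P : Finset S)
    (hP : ∀ p ∈ P, r ≤ u p) (N : Finset S) (hN : ∀ s ∈ N, u s < r)
    (hbal : ∑ s ∈ N, (r - u s) ≤ ∑ p ∈ P, (u p - r)) :
    ∃ g, IsAssignment u r P N g := by
  induction P using Finset.induction_on generalizing N with
  | empty =>
    have hN : N = ∅ := by
      by_contra hne
      have := sum_pos (fun s hs => sub_pos.2 (hN s hs)) (nonempty_iff_ne_empty.2 hne)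
      simp only [sum_empty] at hbal
      linarith
    subst hN
    exact ⟨fun _ => none, ⟨by simp, by simp, by simp⟩⟩
  | insert p P hp ih =>
    have hP' : ∀ q ∈ P, r ≤ u q := fun q hq => hP q (mem_insert_of_mem hq)
    have hup : r ≤ u p := hP p (mem_insert_self p P)
    rw [sum_insert hp] at hbal
    by_cases hfit : ∑ s ∈ N, (r - u s) ≤ u p - r
    · obtain ⟨g, hg⟩ := ih hP' ∅ (by simp)
        (by simpa using sum_nonneg fun q hq => sub_nonneg.2 (hP' q hq))
      exact ⟨_, hg.extend hp subset_rfl (empty_subset _) hfit (by simpa using hr.trans hup)⟩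
    · obtain ⟨M, hMN, n, hn, hM, hover⟩ :=
        exists_subset_sum_le_lt_add (fun s => r - u s) (sub_nonneg.2 hup) N (not_le.1 hfit)
      have hsplit : ∑ s ∈ N, (r - u s)
          = ∑ s ∈ M, (r - u s) + (r - u n) + ∑ s ∈ (N \ M).erase n, (r - u s) := by
        rw [← sum_sdiff hMN, ← add_sum_erase _ _ hn]; ring
      obtain ⟨g, hg⟩ := ih hP' ((N \ M).erase n)
        (fun s hs => hN s (mem_sdiff.1 (mem_of_mem_erase hs)).1) (by linarith)
      refine ⟨_, hg.extend hp hMN (erase_subset _ _) hM ?_⟩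
      rw [sdiff_erase_self hn, sum_singleton]
      linarith [hN n (mem_sdiff.1 hn).1]

lemma IsAssignment.mul_card_le_sum_insert {u : S → ℝ} {r : ℝ} {P N : Finset S}
    {g : S → Option S} (hg : IsAssignment u r P N g) {p : S} (hp : p ∈ P) (hpN : p ∉ N) :
    r * #(insert p {s ∈ N | g s = some p}) ≤ ∑ s ∈ insert p {s ∈ N | g s = some p}, u s := by
  have hfit := hg.deficit_le p hp
  have hpN' : p ∉ {s ∈ N | g s = some p} := fun h => hpN (mem_filter.1 h).1
  rw [sum_sub_distrib, sum_const, nsmul_eq_mul] at hfit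
  rw [card_insert_of_notMem hpN', sum_insert hpN', Nat.cast_succ]
  linarith

lemma IsAssignment.sum_add_sum_le {u : S → ℝ} {r : ℝ} {P N : Finset S} {g : S → Option S}
    (hg : IsAssignment u r P N g) (hu : ∀ s ∈ N, 0 ≤ u s) :
    ∑ s ∈ P, u s + ∑ s ∈ N, u s ≤ 2 * (∑ s ∈ P, u s + ∑ s ∈ N with g s ≠ none, u s) := by
  have hN := sum_filter_add_sum_filter_not N (fun s => g s = none) u
  have hkept : 0 ≤ ∑ s ∈ N with g s ≠ none, u s :=
    sum_nonneg fun s hs => hu s (mem_filter.1 hs).1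
  linarith [hg.dropped_le]

lemma mul_card_le_sum_of_subset {u : S → ℝ} {r : ℝ} {B U : Finset S} (hUB : U ⊆ B)
    (hB : r * #B ≤ ∑ s ∈ B, u s) (hlow : ∀ s ∈ B \ U, u s ≤ r) :
    r * #U ≤ ∑ s ∈ U, u s := by
  have hle : ∑ s ∈ B \ U, u s ≤ #(B \ U) • r := sum_le_card_nsmul _ _ _ hlow
  rw [← sum_sdiff hUB, card_sdiff_of_subset hUB, nsmul_eq_mul,
    Nat.cast_sub (card_le_card hUB)] at *
  linarith

variable [Fintype S]

theorem exists_bundling_of_mul_card_le_sum (u : S → ℝ) {r : ℝ} (hr : 0 ≤ r) (A : Finset S)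
    (hu : ∀ s ∈ A, 0 ≤ u s) (hA : r * #A ≤ ∑ s ∈ A, u s) :
    ∃ b : S → Option S,
      (∀ s p, b s = some p → s ∈ A ∧ p ∈ A ∧ b p = some p ∧ r ≤ u p ∧ (s ≠ p → u s < r)) ∧
      (∀ p, b p = some p → r * #{s | b s = some p} ≤ ∑ s with b s = some p, u s) ∧
      ∑ s ∈ A, u s ≤ 2 * ∑ s ∈ A with b s ≠ none, u s := by
  set P := {s ∈ A | r ≤ u s}
  set N := {s ∈ A | ¬ r ≤ u s}
  have hPN : ∀ {s}, s ∈ P → s ∉ N := fun hP hN => (mem_filter.1 hN).2 (mem_filter.1 hP).2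
  obtain ⟨g, hg⟩ := exists_isAssignment u hr P (fun p hp => (mem_filter.1 hp).2) N
    (fun s hs => not_le.1 (mem_filter.1 hs).2) (sum_sub_le_sum_sub_of_mul_card_le_sum hA)
  refine ⟨fun s => if s ∈ P then some s else g s, fun s p h => ?_, fun p hp => ?_, ?_⟩
  · dsimp only at h
    split_ifs at h with hs
    · cases h
      obtain ⟨hsA, hrs⟩ := mem_filter.1 hs
      simp [hs, hsA, hrs]
    · obtain ⟨⟨hsA, hrs⟩, hpA, hrp⟩ := And.imp mem_filter.1 mem_filter.1 (hg.mem h)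
      exact ⟨hsA, hpA, if_pos (hg.mem h).2, hrp, fun _ => not_le.1 hrs⟩
  · dsimp only at hp ⊢
    have hpP : p ∈ P := by
      by_contra hpP
      rw [if_neg hpP] at hp
      exact hPN (hg.mem hp).2 (hg.mem hp).1
    have hbundle : ({s | (if s ∈ P then some s else g s) = some p} : Finset S)
        = insert p {s ∈ N | g s = some p} := by
      ext s
      by_cases hs : s ∈ P
      · simp [hs, hPN hs]
      · have : s ≠ p := by rintro rfl; exact hs hpP
        have := @hg.mem s p
        simp_all
    rw [hbundle]
    exact hg.mul_card_le_sum_insert hpP (hPN hpP)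
  · have hkept : {s ∈ A | (if s ∈ P then some s else g s) ≠ none}
        = P ∪ {s ∈ N | g s ≠ none} := by
      ext s
      by_cases hsA : s ∈ A
      · by_cases hrs : r ≤ u s <;> simp [P, N, hsA, hrs, lt_of_not_ge]
      · simp [P, N, hsA]
    have hdisj : Disjoint P {s ∈ N | g s ≠ none} :=
      disjoint_filter_filter_not A A _ |>.mono_right (filter_subset _ _)
    rw [hkept, sum_union hdisj, ← sum_filter_add_sum_filter_not A (fun s => r ≤ u s)]
    exact hg.sum_add_sum_le fun s hs => hu s (mem_filter.1 hs).1

variable {B : Type*}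

/-- `b s = some p` puts `s` into the bundle anchored at `p`; `b s = none` discards `s`. -/
structure IsBundling_s5 (W : S → B → ℝ) (ρ : B → ℝ) (x : S → Option B) (b : S → Option S) :
    Prop where
  anchor : ∀ {s p}, b s = some p → b p = some p
  exists_buyer : ∀ {s p}, b s = some p →
    ∃ j, x s = some j ∧ x p = some j ∧ ρ j ≤ W p j ∧ (s ≠ p → W s j < ρ j)
  feasible : ∀ {p j}, b p = some p → x p = some j →
    ρ j * #{s | b s = some p} ≤ ∑ s with b s = some p, W s j

lemma IsBundling_s5.mul_card_le_sum {W : S → B → ℝ} {ρ : B → ℝ} {x : S → Option B}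
    {b : S → Option S} (hb : IsBundling_s5 W ρ x b) {T : Finset S} {j : B}
    (hTx : ∀ s ∈ T, x s = some j) (hT : ∀ s ∈ T, ∃ p ∈ T, b s = some p) :
    ρ j * #T ≤ ∑ s ∈ T, W s j := by
  have hmaps : ∀ s ∈ T, b s ∈ T.image b := fun s hs => mem_image_of_mem b hs
  rw [card_eq_sum_card_fiberwise hmaps, ← sum_fiberwise_of_maps_to hmaps, Nat.cast_sum, mul_sum]
  refine sum_le_sum fun o ho => ?_
  obtain ⟨s₀, hs₀, rfl⟩ := mem_image.1 ho
  obtain ⟨p, hpT, hs₀p⟩ := hT s₀ hs₀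
  rw [hs₀p]
  refine mul_card_le_sum_of_subset (B := {s | b s = some p})
    (monotone_filter_left _ (subset_univ T))
    (hb.feasible (hb.anchor hs₀p) (hTx p hpT)) fun s hs => ?_
  obtain ⟨hbs, hsT⟩ := mem_sdiff.1 hs
  obtain ⟨j', -, hxp, -, hlt⟩ := hb.exists_buyer (mem_filter.1 hbs).2
  obtain rfl : j' = j := Option.some_inj.1 (hxp.symm.trans (hTx p hpT))
  refine (hlt ?_).le
  rintro rfl
  exact hsT (mem_filter.2 ⟨hpT, (mem_filter.1 hbs).2⟩)

end Bundling

section Allocation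

variable {S B : Type*}

def itemValue (W : S → B → ℝ) (x : S → Option B) (s : S) : ℝ :=
  ((x s).map (W s)).getD 0

lemma valueOn_eq_sum_itemValue [Fintype S] (W : S → B → ℝ) (x : S → Option B) :
    valueOn W x = ∑ s, itemValue W x s :=
  rfl

lemma itemValue_nonneg {W : S → B → ℝ} (hW : ∀ s j, 0 ≤ W s j) (x : S → Option B) (s : S) :
    0 ≤ itemValue W x s := by
  unfold itemValue
  cases x s <;> simp [hW]

lemma sum_itemValue_eq_sum_sum [Fintype B] [DecidableEq B] (W : S → B → ℝ) (x : S → Option B)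
    (T : Finset S) :
    ∑ s ∈ T, itemValue W x s = ∑ j, ∑ s ∈ T with x s = some j, W s j := by
  rw [← sum_fiberwise T x, Fintype.sum_option,
    sum_eq_zero fun s hs => by simp [itemValue, (mem_filter.1 hs).2], zero_add]
  exact sum_congr rfl fun j _ => sum_congr rfl fun s hs => by simp [itemValue, (mem_filter.1 hs).2]

theorem exists_isBundling [Fintype S] [DecidableEq S] [Fintype B] [DecidableEq B]
    (W : S → B → ℝ) (ρ : B → ℝ) (hW : ∀ s j, 0 ≤ W s j) (hρ : ∀ j, 0 ≤ ρ j) (x : S → Option B) (hx : FeasibleOn W ρ x) :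
    ∃ b, IsBundling_s5 W ρ x b ∧
      valueOn W x ≤ 2 * ∑ s with b s ≠ none, itemValue W x s := by
  choose c hc_mem hc_feas hc_half using fun j =>
    exists_bundling_of_mul_card_le_sum (W · j) (hρ j) {s | x s = some j} (fun s _ => hW s j) (hx j)
  have hb_eq : ∀ {s j}, x s = some j → (x s).bind (fun j => c j s) = c j s := fun h => by simp [h]
  have hb_some : ∀ {s p j}, x p = some j →
      ((x s).bind (fun j => c j s) = some p ↔ c j s = some p) := by
    intro s p j hxp
    constructor
    · intro h
      obtain ⟨j', hxs, hc⟩ := Option.bind_eq_some_iff.1 h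
      obtain ⟨-, hpA, -⟩ := hc_mem j' s p hc
      obtain rfl : j' = j := Option.some_inj.1 ((mem_filter.1 hpA).2.symm.trans hxp)
      exact hc
    · intro h
      rw [hb_eq (mem_filter.1 (hc_mem j s p h).1).2, h]
  refine ⟨fun s => (x s).bind (fun j => c j s), ⟨?_, ?_, ?_⟩, ?_⟩
  · intro s p h
    obtain ⟨j, -, hc⟩ := Option.bind_eq_some_iff.1 h
    obtain ⟨-, hpA, hcp, -⟩ := hc_mem j s p hc
    exact (hb_some (mem_filter.1 hpA).2).2 hcp
  · intro s p h
    obtain ⟨j, hxs, hc⟩ := Option.bind_eq_some_iff.1 h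
    obtain ⟨-, hpA, -, hrp, hlt⟩ := hc_mem j s p hc
    exact ⟨j, hxs, (mem_filter.1 hpA).2, hrp, hlt⟩
  · intro p j hbp hxp
    simp only [hb_some hxp]
    exact hc_feas j p ((hb_some hxp).1 hbp)
  · rw [valueOn_eq_sum_itemValue, sum_itemValue_eq_sum_sum, sum_itemValue_eq_sum_sum, mul_sum]
    refine sum_le_sum fun j _ => ?_
    have hkept : ({s | (x s).bind (fun j => c j s) ≠ none} : Finset S).filter (x · = some j)
        = ({s | x s = some j} : Finset S).filter (c j · ≠ none) := by
      ext s
      by_cases h : x s = some j <;> simp [h]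
    rw [hkept]
    exact hc_half j

end Allocation

section Copies

variable {B : Type*} {k : ℕ}

def roundAlloc (x : I × Fin k → Option B) (b : I × Fin k → Option (I × Fin k)) (f : I → Fin k) :
    I → Option B :=
  fun i => if ∃ p, b (i, f i) = some p ∧ f p.1 = p.2 then x (i, f i) else none

lemma card_filter_forall_eq_mul_pow (A : Finset I) (g : I → Fin k) :
    #{f : I → Fin k | ∀ a ∈ A, f a = g a} * k ^ #A = k ^ Fintype.card I := by
  have hpi : ({f | ∀ a ∈ A, f a = g a} : Finset (I → Fin k))
      = Fintype.piFinset fun a => if a ∈ A then {g a} else univ := by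
    ext f
    simp only [mem_filter, mem_univ, true_and, Fintype.mem_piFinset]
    refine ⟨fun h a => ?_, fun h a ha => by simpa [ha] using h a⟩
    split_ifs with ha <;> simp [h a, ha]
  simp only [hpi, Fintype.card_piFinset, apply_ite card, card_singleton, card_univ,
    Fintype.card_fin, prod_ite, prod_const_one, one_mul, prod_const]
  rw [← pow_add]
  congr 1
  rw [filter_notMem_eq_sdiff, card_sdiff_add_card_eq_card (subset_univ A), card_univ]

lemma pow_card_le_sq_mul_card_filter (hk : 1 ≤ k) {s p : I × Fin k} (h : s.1 = p.1 → s = p) :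
    k ^ Fintype.card I ≤ k ^ 2 * #{f : I → Fin k | f s.1 = s.2 ∧ f p.1 = p.2} := by
  have hfilter : ({f | f s.1 = s.2 ∧ f p.1 = p.2} : Finset (I → Fin k))
      = univ.filter fun f => ∀ a ∈ ({s.1, p.1} : Finset I), f a = if a = p.1 then p.2 else s.2 := by
    ext f
    by_cases hsp : s.1 = p.1
    · obtain rfl := h hsp
      simp
    · simp [hsp]
  rw [hfilter, ← card_filter_forall_eq_mul_pow {s.1, p.1}, mul_comm (k ^ 2)]
  exact Nat.mul_le_mul_left _ (Nat.pow_le_pow_right hk card_le_two)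

lemma IsBundling_s5.eq_of_fst_eq {v : I → B → ℝ} {ρ : B → ℝ} {x : I × Fin k → Option B}
    {b : I × Fin k → Option (I × Fin k)} (hb : IsBundling_s5 (fun s => v s.1) ρ x b)
    {s p : I × Fin k} (h : b s = some p) (hsp : s.1 = p.1) : s = p := by
  by_contra hne
  obtain ⟨j, -, -, hle, hlt⟩ := hb.exists_buyer h
  have := hlt hne
  simp only [hsp] at this
  linarith

lemma IsBundling_s5.feasibleOn_roundAlloc [DecidableEq B] {v : I → B → ℝ} {ρ : B → ℝ}
    {x : I × Fin k → Option B} {b : I × Fin k → Option (I × Fin k)}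
    (hb : IsBundling_s5 (fun s => v s.1) ρ x b) (f : I → Fin k) :
    FeasibleOn v ρ (roundAlloc x b f) := by
  intro j
  have hinj : Function.Injective fun i : I => (i, f i) := fun _ _ h => congrArg Prod.fst h
  have hmem : ∀ i, roundAlloc x b f i = some j ↔
      ∃ p, b (i, f i) = some p ∧ f p.1 = p.2 ∧ x (i, f i) = some j := by
    intro i
    unfold roundAlloc
    split_ifs with h
    · obtain ⟨p, hp⟩ := h
      exact ⟨fun hx => ⟨p, hp.1, hp.2, hx⟩, fun ⟨_, _, _, hx⟩ => hx⟩
    · exact ⟨fun h => absurd h (by simp), fun ⟨p, hp, hfp, _⟩ => absurd ⟨p, hp, hfp⟩ h⟩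
  have key := hb.mul_card_le_sum (j := j)
    (T := ({i | roundAlloc x b f i = some j} : Finset I).image fun i => (i, f i)) ?_ ?_
  · rwa [card_image_of_injective _ hinj, sum_image fun _ _ _ _ h => hinj h] at key
  · intro s hs
    obtain ⟨i, hi, rfl⟩ := mem_image.1 hs
    obtain ⟨p, -, -, hx⟩ := (hmem i).1 (mem_filter.1 hi).2
    exact hx
  · intro s hs
    obtain ⟨i, hi, rfl⟩ := mem_image.1 hs
    obtain ⟨p, hbp, hfp, hx⟩ := (hmem i).1 (mem_filter.1 hi).2
    obtain ⟨j', hxs, hxp, -⟩ := hb.exists_buyer hbp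
    have hp : (p.1, f p.1) = p := by rw [hfp]
    refine ⟨p, mem_image.2 ⟨p.1, mem_filter.2 ⟨mem_univ _, (hmem p.1).2 ⟨p, ?_, hfp, ?_⟩⟩, hp⟩, hbp⟩
    · rw [hp]; exact hb.anchor hbp
    · rw [hp, hxp, ← hxs, hx]

lemma sum_valueOn_roundAlloc (v : I → B → ℝ) (x : I × Fin k → Option B)
    (b : I × Fin k → Option (I × Fin k)) :
    ∑ f, valueOn v (roundAlloc x b f) = ∑ s, #{f : I → Fin k | f s.1 = s.2 ∧
      ∃ p, b s = some p ∧ f p.1 = p.2} * itemValue (fun s => v s.1) x s := by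
  have hvalue : ∀ f : I → Fin k, valueOn v (roundAlloc x b f) = ∑ s,
      if f s.1 = s.2 ∧ ∃ p, b s = some p ∧ f p.1 = p.2 then itemValue (fun s => v s.1) x s
      else 0 := by
    intro f
    rw [Fintype.sum_prod_type]
    refine sum_congr rfl fun i _ => ?_
    simp only [ite_and, sum_ite_eq, mem_univ, if_true]
    unfold roundAlloc itemValue
    split_ifs <;> simp
  simp_rw [hvalue]
  rw [sum_comm]
  exact sum_congr rfl fun s _ => by rw [← sum_filter, sum_const, nsmul_eq_mul]

lemma IsBundling_s5.pow_card_mul_sum_le (hk : 1 ≤ k) {v : I → B → ℝ} (hv : ∀ i j, 0 ≤ v i j)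
    {ρ : B → ℝ} {x : I × Fin k → Option B} {b : I × Fin k → Option (I × Fin k)}
    (hb : IsBundling_s5 (fun s => v s.1) ρ x b) :
    (k : ℝ) ^ Fintype.card I * ∑ s with b s ≠ none, itemValue (fun s => v s.1) x s
      ≤ k ^ 2 * ∑ f, valueOn v (roundAlloc x b f) := by
  have hval := itemValue_nonneg (fun s j => hv s.1 j) x
  rw [sum_valueOn_roundAlloc, mul_sum, mul_sum]
  refine (sum_le_sum fun s hs => ?_).trans
    (sum_le_sum_of_subset_of_nonneg (filter_subset _ _) fun s _ _ =>
      mul_nonneg (by positivity) (mul_nonneg (Nat.cast_nonneg _) (hval s)))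
  obtain ⟨p, hp⟩ := Option.ne_none_iff_exists'.1 (mem_filter.1 hs).2
  have hcount := pow_card_le_sq_mul_card_filter hk (hb.eq_of_fst_eq hp)
  simp only [hp, Option.some_inj, exists_eq_left']
  rw [← mul_assoc]
  exact mul_le_mul_of_nonneg_right (by exact_mod_cast hcount) (hval s)

end Copies

/-- Supply Lemma: duplicating every item `k` times increases the optimal
welfare by at most a factor `2k²`: every feasible allocation of the copied
instance is dominated, up to a `2k²` factor, by some feasible allocation of
the original instance. -/
theorem stmt_5 (v : I → J → ℝ) (ρ : J → ℝ)
    (hv : ∀ i j, 0 ≤ v i j) (hρ : ∀ j, 0 ≤ ρ j)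
    (k : ℕ) (hk : 1 ≤ k)
    (x' : I × Fin k → Option J)
    (hfeas' : FeasibleOn (fun ic : I × Fin k => v ic.1) ρ x') :
    ∃ x : I → Option J, FeasibleOn v ρ x ∧
      valueOn (fun ic : I × Fin k => v ic.1) x' ≤ 2 * (k : ℝ) ^ 2 * valueOn v x := by
  obtain ⟨b, hb, hhalf⟩ :=
    exists_isBundling (fun s : I × Fin k => v s.1) ρ (fun s j => hv s.1 j) hρ x' hfeas'
  have hsum : ∑ _f : I → Fin k, valueOn (fun ic : I × Fin k => v ic.1) x'
      ≤ ∑ f, 2 * (k : ℝ) ^ 2 * valueOn v (roundAlloc x' b f) := by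
    rw [sum_const, card_univ, Fintype.card_fun, Fintype.card_fin, nsmul_eq_mul, ← mul_sum,
      Nat.cast_pow]
    have hk' : (0 : ℝ) ≤ (k : ℝ) ^ Fintype.card I := by positivity
    linarith [mul_le_mul_of_nonneg_left hhalf hk', hb.pow_card_mul_sum_le hk hv]
  obtain ⟨f, -, hf⟩ := exists_le_of_sum_le ⟨fun _ => ⟨0, hk⟩, mem_univ _⟩ hsum
  exact ⟨roundAlloc x' b f, hb.feasibleOn_roundAlloc f, hf⟩
end

section
/- (Superlinear gain in supply) For every k ≥ 1 and ε ∈ (0, 1/k), there exists a k-buyer AVA instance I with all ρ_j = 1 such that OPT(I) ≤ 2 + kε, while the instance I' obtained by duplicating each item k times satisfies OPT(I') ≥ k·(k·(1−ε) + 1 + kε) ≥ k². Hence the k-fold increase in supply increases the optimal welfare by a factor of Ω(k²). -/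
/-- Feasibility for an AVA instance with unit thresholds (`ρ_j = 1`). -/
def unitFeasible {α : Type*} [Fintype α] [DecidableEq α] {k : ℕ}
    (w : α → Fin k → ℝ) (x : α → Option (Fin k)) : Prop :=
  ∀ j : Fin k, ((Finset.univ.filter fun a => x a = some j).card : ℝ) ≤
    ∑ a ∈ Finset.univ.filter fun a => x a = some j, w a j

/-- Total value of an allocation. -/
def unitValue {α : Type*} [Fintype α] {k : ℕ}
    (w : α → Fin k → ℝ) (x : α → Option (Fin k)) : ℝ :=
  ∑ a, ((x a).map (w a)).getD 0

/-!
Item `0` is the P-item and item `i.succ` is buyer `i`'s N-item. A buyer whose bundle lacks the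
P-item values it at most `1 - ε < 1`, so feasibility forces that bundle to be empty; hence only the
holder of the P-item is served, and it gets at most `(1 + kε) + (1 - ε)`. With `k` copies of each
item, buyer `j` can take one copy of the P-item and all `k` copies of its N-item: `k + 1` items
worth exactly `1 + kε + k(1 - ε) = k + 1`.
-/

open Finset

section Bundles

variable {α : Type*} [Fintype α] {k : ℕ} (w : α → Fin k → ℝ) (x : α → Option (Fin k))

theorem unitValue_eq_sum_bundle :
    unitValue w x = ∑ j, ∑ a ∈ univ.filter (fun a => x a = some j), w a j := by
  have hterm : ∀ a, ((x a).map (w a)).getD 0 = ∑ j, if x a = some j then w a j else 0 := by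
    intro a
    cases x a <;> simp
  simp only [unitValue, hterm, sum_filter]
  exact sum_comm

theorem one_le_sum_bundle_of_unitFeasible [DecidableEq α] {w : α → Fin k → ℝ}
    {x : α → Option (Fin k)} (hx : unitFeasible w x) {a : α} {j : Fin k} (ha : x a = some j) :
    1 ≤ ∑ b ∈ univ.filter (fun b => x b = some j), w b j := by
  have hcard : (1 : ℝ) ≤ (univ.filter fun b => x b = some j).card := by
    exact_mod_cast card_pos.mpr ⟨a, by simpa using ha⟩
  exact hcard.trans (hx j)

end Bundles

namespace SuperlinearSupply

def value (k : ℕ) (ε : ℝ) (a : Fin (k + 1)) (j : Fin k) : ℝ :=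
  Fin.cases (1 + k * ε) (fun i => if i = j then 1 - ε else 0) a

variable {k : ℕ} {ε : ℝ}

theorem value_eq (a : Fin (k + 1)) (j : Fin k) :
    value k ε a j = (if a = 0 then 1 + k * ε else 0) + (if a = j.succ then 1 - ε else 0) := by
  cases a using Fin.cases <;> simp [value, (Fin.succ_ne_zero _).symm]

theorem value_nonneg (hε : 0 ≤ ε) (hε1 : ε ≤ 1) (a : Fin (k + 1)) (j : Fin k) :
    0 ≤ value k ε a j := by
  rw [value_eq]
  have : 0 ≤ (k : ℝ) * ε := by positivity
  split_ifs <;> linarith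

theorem sum_value (S : Finset (Fin (k + 1))) (j : Fin k) :
    ∑ a ∈ S, value k ε a j =
      (if 0 ∈ S then 1 + k * ε else 0) + (if j.succ ∈ S then 1 - ε else 0) := by
  simp only [value_eq, sum_add_distrib, sum_ite_eq']

theorem sum_bundle_le (hε : 0 < ε) {x : Fin (k + 1) → Option (Fin k)}
    (hx : unitFeasible (value k ε) x) (j : Fin k) :
    ∑ a ∈ univ.filter (fun a => x a = some j), value k ε a j ≤
      if x 0 = some j then 2 + k * ε else 0 := by
  rw [sum_value]
  by_cases h0 : x 0 = some j
  · simp only [h0, mem_filter, mem_univ, true_and, if_true]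
    split_ifs <;> linarith
  · -- without the P-item, buyer `j` values its bundle below its size
    have hsucc : x j.succ ≠ some j := fun hj => by
      have := one_le_sum_bundle_of_unitFeasible hx hj
      rw [sum_value] at this
      simp [h0, hj] at this
      linarith
    simp [h0, hsucc]

theorem unitValue_le (hε : 0 < ε) {x : Fin (k + 1) → Option (Fin k)}
    (hx : unitFeasible (value k ε) x) : unitValue (value k ε) x ≤ 2 + k * ε := by
  rw [unitValue_eq_sum_bundle]
  calc _ ≤ ∑ j, if x 0 = some j then 2 + k * ε else 0 :=
        sum_le_sum fun j _ => sum_bundle_le hε hx j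
    _ ≤ 2 + k * ε := by
      cases x 0 with
      | none => simp only [reduceCtorEq, if_false, sum_const_zero]; positivity
      | some j₀ => simp

-- The copy `(0, c)` of the P-item goes to buyer `c`; every copy of an N-item goes to its owner.
def duplicateAlloc (k : ℕ) (ic : Fin (k + 1) × Fin k) : Option (Fin k) :=
  Fin.cases (some ic.2) some ic.1

theorem card_bundle_duplicateAlloc (j : Fin k) :
    (univ.filter fun ic => duplicateAlloc k ic = some j).card = k + 1 := by
  rw [card_filter]
  simp [duplicateAlloc, Fintype.sum_prod_type, Fin.sum_univ_succ, add_comm]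

theorem sum_bundle_duplicateAlloc (j : Fin k) :
    ∑ ic ∈ univ.filter (fun ic => duplicateAlloc k ic = some j), value k ε ic.1 j =
      1 + k * ε + k * (1 - ε) := by
  rw [sum_filter]
  simp [duplicateAlloc, Fintype.sum_prod_type, Fin.sum_univ_succ, value]
  ring

theorem unitFeasible_duplicateAlloc :
    unitFeasible (fun ic : Fin (k + 1) × Fin k => value k ε ic.1) (duplicateAlloc k) := by
  intro j
  rw [card_bundle_duplicateAlloc, sum_bundle_duplicateAlloc]
  push_cast
  linarith

theorem unitValue_duplicateAlloc :
    unitValue (fun ic : Fin (k + 1) × Fin k => value k ε ic.1) (duplicateAlloc k) =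
      k * (k * (1 - ε) + 1 + k * ε) := by
  simp [unitValue, duplicateAlloc, Fintype.sum_prod_type, Fin.sum_univ_succ, value]
  ring

end SuperlinearSupply

/-- Superlinear gain in supply: for every `k ≥ 1` and `ε ∈ (0, 1/k)` there is a
`k`-buyer unit-`ρ` AVA instance with `OPT ≤ 2 + kε`, while duplicating every
item `k` times gives an instance with `OPT ≥ k(k(1-ε) + 1 + kε) ≥ k²`. -/
theorem stmt_6 : ∀ k : ℕ, 1 ≤ k → ∀ ε : ℝ, 0 < ε → ε < 1 / k →
    ∃ (n : ℕ) (v : Fin n → Fin k → ℝ),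
      (∀ i j, 0 ≤ v i j) ∧
      (∀ x : Fin n → Option (Fin k), unitFeasible v x →
        unitValue v x ≤ 2 + k * ε) ∧
      (∃ x' : Fin n × Fin k → Option (Fin k),
        unitFeasible (fun ic : Fin n × Fin k => v ic.1) x' ∧
        (k : ℝ) * ((k : ℝ) * (1 - ε) + 1 + k * ε) ≤
          unitValue (fun ic : Fin n × Fin k => v ic.1) x') ∧
      ((k : ℝ) ^ 2 ≤ (k : ℝ) * ((k : ℝ) * (1 - ε) + 1 + k * ε)) := by
  intro k hk ε hε hεk
  have hε1 : ε ≤ 1 := by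
    have : 1 / (k : ℝ) ≤ 1 := div_le_one_of_le₀ (by exact_mod_cast hk) (Nat.cast_nonneg k)
    linarith
  refine ⟨k + 1, SuperlinearSupply.value k ε, SuperlinearSupply.value_nonneg hε.le hε1,
    fun x hx => SuperlinearSupply.unitValue_le hε hx, ⟨SuperlinearSupply.duplicateAlloc k,
      SuperlinearSupply.unitFeasible_duplicateAlloc,
      SuperlinearSupply.unitValue_duplicateAlloc.ge⟩, ?_⟩
  have : (k : ℝ) * ((k : ℝ) * (1 - ε) + 1 + k * ε) = k ^ 2 + k := by ring
  rw [this]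
  linarith [(Nat.cast_nonneg k : (0 : ℝ) ≤ k)]
end

section
/- (AVA–GAP correspondence) For an unambiguous AVA instance, construct the GAP instance with one bin (p,j) per P-item p and buyer j, where item p has size 0 and value v_{pj} in bin (p,j), size 1+ε and value 0 in bins (p',j) with p' ≠ p, and each N-item i has size (ρ_j − v_{ij})/(v_{pj} − ρ_j) and value v_{ij} in bin (p,j); bins are constrained by the partition matroid allowing at most one open bin per P-item p. Then there is a value-preserving bijection between maximal feasible GAP solutions (those assigning each P-item to some bin) and permissible bundling-based AVA solutions. -/
variable {I J : Type*} [Fintype I] [Fintype J] [DecidableEq I] [DecidableEq J]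

/-- Size of item `i` in GAP bin `(p, j)`: the P-item `p` itself has size `0` in
its own bins, other P-items have size `1 + ε`, and an N-item has size equal to
its deficit divided by the bin's P-item excess. -/
noncomputable def gapSize (v : I → J → ℝ) (ρ : J → ℝ) (ε : ℝ) (P : I → Prop) [DecidablePred P]
    (i p : I) (j : J) : ℝ :=
  if i = p then 0 else if P i then 1 + ε else (ρ j - v i j) / (v p j - ρ j)

/-- Feasibility of a GAP assignment `y` (each item to at most one bin): bins
are indexed by a P-item and a buyer, bin capacities are respected, and the set
of used bins is independent in the partition matroid (at most one used bin per
P-item). -/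
def GapFeasible (v : I → J → ℝ) (ρ : J → ℝ) (ε : ℝ) (P : I → Prop) [DecidablePred P]
    (y : I → Option (I × J)) : Prop :=
  (∀ i p j, y i = some (p, j) → P p) ∧
  (∀ p j, ∑ i ∈ Finset.univ.filter fun i => y i = some (p, j),
      gapSize v ρ ε P i p j ≤ 1) ∧
  (∀ p j j', (∃ i, y i = some (p, j)) → (∃ i', y i' = some (p, j')) → j = j')

/-- A maximal GAP solution: every P-item is assigned to some bin. -/
def GapMaximal (P : I → Prop) (y : I → Option (I × J)) : Prop :=
  ∀ p, P p → ∃ b, y p = some b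

/-- A permissible bundling-based AVA solution, where `y i = some (p, j)` means
item `i` is allocated to buyer `j` in the bundle whose unique P-item is `p`. -/
def BundlingSolution (v : I → J → ℝ) (ρ : J → ℝ) (P : I → Prop) [DecidablePred P]
    (y : I → Option (I × J)) : Prop :=
  (∀ i p j, y i = some (p, j) → P p ∧ (i ≠ p → ¬ P i)) ∧
  (∀ p j, (∃ i, y i = some (p, j)) → y p = some (p, j)) ∧
  (∀ p j, ρ j * ((Finset.univ.filter fun i => y i = some (p, j)).card : ℝ) ≤
    ∑ i ∈ Finset.univ.filter fun i => y i = some (p, j), v i j)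

/-- Value of a GAP assignment under the constructed instance. -/
def gapValue (v : I → J → ℝ) (P : I → Prop) [DecidablePred P]
    (y : I → Option (I × J)) : ℝ :=
  ∑ i, (y i).elim 0 fun pj =>
    if i = pj.1 then v pj.1 pj.2 else if P i then 0 else v i pj.2

/-- Welfare of the corresponding AVA allocation. -/
def avaValue (v : I → J → ℝ) (y : I → Option (I × J)) : ℝ :=
  ∑ i, (y i).elim 0 fun pj => v i pj.2

/-- AVA–GAP correspondence: for an unambiguous AVA instance, maximal feasible
solutions of the constructed matroid-constrained GAP instance are exactly the
permissible bundling-based AVA solutions allocating every P-item, and the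
correspondence preserves values. -/
theorem stmt_7 (v : I → J → ℝ) (ρ : J → ℝ) (ε : ℝ) (hε : 0 < ε)
    (P : I → Prop) [DecidablePred P]
    (hP : ∀ i j, P i → ρ j < v i j)
    (hN : ∀ i j, ¬ P i → v i j < ρ j)
    (hρ : ∀ j, 0 ≤ ρ j) :
    ∀ y : I → Option (I × J),
      ((GapFeasible v ρ ε P y ∧ GapMaximal P y) ↔
        (BundlingSolution v ρ P y ∧ ∀ p, P p → ∃ b, y p = some b)) ∧
      (GapFeasible v ρ ε P y ∧ GapMaximal P y →
        gapValue v P y = avaValue v y) := by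
  intro y
  -- all sizes in an open P-bin are nonnegative
  have hsize_nonneg : ∀ p j, P p → ∀ i, 0 ≤ gapSize v ρ ε P i p j := by
    intro p j hp i
    unfold gapSize
    split_ifs with h1 h2
    · exact le_rfl
    · linarith
    · exact div_nonneg (by linarith [hN i j h2]) (by linarith [hP p j hp])
  -- key: an item assigned to a bin of another P-item cannot itself be a P-item
  have key : GapFeasible v ρ ε P y → ∀ i p j, y i = some (p, j) → i ≠ p → ¬ P i := by
    rintro ⟨h1, h2, h3⟩ i p j hy hip hPi
    have hp : P p := h1 i p j hy
    have hi : i ∈ Finset.univ.filter (fun i => y i = some (p, j)) := by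
      simp [hy]
    have hle := h2 p j
    have hsum : gapSize v ρ ε P i p j ≤
        ∑ i' ∈ Finset.univ.filter (fun i => y i = some (p, j)), gapSize v ρ ε P i' p j :=
      Finset.single_le_sum (fun i' _ => hsize_nonneg p j hp i') hi
    have heq : gapSize v ρ ε P i p j = 1 + ε := by simp [gapSize, hip, hPi]
    linarith
  -- equivalence of capacity and value constraints on a nonempty bin
  have equiv_pj : ∀ p j, P p →
      (∀ i ∈ (Finset.univ.filter fun i => y i = some (p, j)), i ≠ p → ¬ P i) →
      p ∈ (Finset.univ.filter fun i => y i = some (p, j)) →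
      ((∑ i ∈ (Finset.univ.filter fun i => y i = some (p, j)), gapSize v ρ ε P i p j ≤ 1)
        ↔ (ρ j * ((Finset.univ.filter fun i => y i = some (p, j)).card : ℝ) ≤
            ∑ i ∈ (Finset.univ.filter fun i => y i = some (p, j)), v i j)) := by
    intro p j hp hnp hpS
    set S := Finset.univ.filter fun i => y i = some (p, j) with hS
    have hd : 0 < v p j - ρ j := by linarith [hP p j hp]
    have hsum_eq : ∑ i ∈ S, gapSize v ρ ε P i p j
        = (∑ i ∈ S.erase p, (ρ j - v i j)) / (v p j - ρ j) := by
      rw [← Finset.add_sum_erase _ _ hpS]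
      have h0 : gapSize v ρ ε P p p j = 0 := by simp [gapSize]
      rw [h0, zero_add, Finset.sum_div]
      refine Finset.sum_congr rfl fun x hx => ?_
      have hxp : x ≠ p := Finset.ne_of_mem_erase hx
      have hxP : ¬ P x := hnp x (Finset.mem_of_mem_erase hx) hxp
      simp [gapSize, hxp, hxP]
    have herase : ∑ i ∈ S.erase p, (ρ j - v i j)
        = ((S.erase p).card : ℝ) * ρ j - ∑ i ∈ S.erase p, v i j := by
      rw [Finset.sum_sub_distrib, Finset.sum_const, nsmul_eq_mul]
    have hvsum : ∑ i ∈ S, v i j = v p j + ∑ i ∈ S.erase p, v i j :=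
      (Finset.add_sum_erase _ _ hpS).symm
    have hcard : ((S.erase p).card : ℝ) + 1 = (S.card : ℝ) := by
      exact_mod_cast congrArg (fun n : ℕ => (n : ℝ)) (Finset.card_erase_add_one hpS)
    rw [hsum_eq, div_le_one hd, herase, hvsum, ← hcard]
    constructor <;> intro h <;> nlinarith [hρ j]
  constructor
  · constructor
    · rintro ⟨hf, hmax⟩
      have hkey := key hf
      obtain ⟨h1, h2, h3⟩ := hf
      have hself : ∀ p j, (∃ i, y i = some (p, j)) → y p = some (p, j) := by
        rintro p j ⟨i, hy⟩
        have hp : P p := h1 i p j hy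
        obtain ⟨⟨p', j'⟩, hy'⟩ := hmax p hp
        have hpp' : p = p' := by
          by_contra hne
          exact hkey p p' j' hy' hne hp
        subst hpp'
        have := h3 p j j' ⟨i, hy⟩ ⟨p, hy'⟩
        rw [hy', this]
      refine ⟨⟨fun i p j hy => ⟨h1 i p j hy, fun hip => hkey i p j hy hip⟩, hself, ?_⟩, hmax⟩
      intro p j
      by_cases hS : ∃ i, y i = some (p, j)
      · obtain ⟨i, hy⟩ := hS
        have hp : P p := h1 i p j hy
        have hpS : p ∈ Finset.univ.filter fun i => y i = some (p, j) := by
          simp [hself p j ⟨i, hy⟩]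
        have hnp : ∀ i ∈ (Finset.univ.filter fun i => y i = some (p, j)), i ≠ p → ¬ P i := by
          intro x hx hxp
          exact hkey x p j (by simpa using hx) hxp
        exact (equiv_pj p j hp hnp hpS).mp (h2 p j)
      · have : (Finset.univ.filter fun i => y i = some (p, j)) = ∅ := by
          refine Finset.filter_eq_empty_iff.mpr fun x _ hx => hS ⟨x, hx⟩
        simp [this]
    · rintro ⟨⟨b1, b2, b3⟩, hmax⟩
      refine ⟨⟨fun i p j hy => (b1 i p j hy).1, ?_, ?_⟩, hmax⟩
      · intro p j
        by_cases hS : ∃ i, y i = some (p, j)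
        · obtain ⟨i, hy⟩ := hS
          have hp : P p := (b1 i p j hy).1
          have hpS : p ∈ Finset.univ.filter fun i => y i = some (p, j) := by
            simp [b2 p j ⟨i, hy⟩]
          have hnp : ∀ i ∈ (Finset.univ.filter fun i => y i = some (p, j)), i ≠ p → ¬ P i := by
            intro x hx hxp
            exact (b1 x p j (by simpa using hx)).2 hxp
          exact (equiv_pj p j hp hnp hpS).mpr (b3 p j)
        · have : (Finset.univ.filter fun i => y i = some (p, j)) = ∅ := by
            refine Finset.filter_eq_empty_iff.mpr fun x _ hx => hS ⟨x, hx⟩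
          simp [this]
      · intro p j j' hj hj'
        have e1 := b2 p j hj
        have e2 := b2 p j' hj'
        rw [e1] at e2
        exact (Prod.mk.injEq _ _ _ _).mp (Option.some.inj e2) |>.2
  · rintro ⟨hf, hmax⟩
    have hkey := key hf
    unfold gapValue avaValue
    refine Finset.sum_congr rfl fun i _ => ?_
    cases hyi : y i with
    | none => rfl
    | some pj =>
      obtain ⟨p, j⟩ := pj
      simp only [Option.elim]
      by_cases hip : i = p
      · subst hip; simp
      · have hPi : ¬ P i := hkey i p j hyi hip
        simp [hip, hPi]
end

section
/- (Integrality gap of the naive LP) For every n there exists an n-buyer unit-ρ AVA instance on which the natural LP relaxation of AVA (dropping integrality of x_{ij} ∈ {0,1}) has optimal value at least n + 1 − O(ε), while the optimal integral solution has value at most 2 + nε. Hence the integrality gap of the natural LP relaxation is Ω(n). -/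
/-- Integrality gap of the natural LP relaxation of AVA: for every `n` there is
an `n`-buyer unit-`ρ` instance (one P-item `none` and `n` N-items `some i`) on
which some fractional feasible solution attains value at least `n + 1 - nε`,
while every integral feasible solution has value at most `2 + nε`. -/
theorem stmt_9 : ∀ n : ℕ, 1 ≤ n → ∀ ε : ℝ, 0 < ε → ε < 1 →
    ∃ v : Option (Fin n) → Fin n → ℝ,
      (∀ i j, 0 ≤ v i j) ∧
      (∃ x : Option (Fin n) → Fin n → ℝ,
        (∀ i j, 0 ≤ x i j) ∧ (∀ i j, x i j ≤ 1) ∧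
        (∀ i, ∑ j, x i j ≤ 1) ∧
        (∀ j, (∑ i, x i j) ≤ ∑ i, v i j * x i j) ∧
        ((n : ℝ) + 1 - n * ε ≤ ∑ i, ∑ j, v i j * x i j)) ∧
      (∀ x : Option (Fin n) → Fin n → ℝ,
        (∀ i j, x i j = 0 ∨ x i j = 1) →
        (∀ i, ∑ j, x i j ≤ 1) →
        (∀ j, (∑ i, x i j) ≤ ∑ i, v i j * x i j) →
        ∑ i, ∑ j, v i j * x i j ≤ 2 + n * ε) := by
  intro n hn ε hε hε1
  have hn0 : (0:ℝ) < (n:ℝ) := by exact_mod_cast Nat.lt_of_lt_of_le Nat.zero_lt_one hn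
  have hnne : (n:ℝ) ≠ 0 := ne_of_gt hn0
  refine ⟨fun i j => match i with
    | none => 1 + n * ε
    | some i => if i = j then 1 - ε else 0, ?_, ?_, ?_⟩
  · rintro (_|i) j
    · positivity
    · dsimp only
      split <;> nlinarith
  · refine ⟨fun i j => match i with
      | none => 1 / n
      | some i => if i = j then 1 else 0, ?_, ?_, ?_, ?_, ?_⟩
    · rintro (_|i) j
      · positivity
      · dsimp only; split <;> norm_num
    · rintro (_|i) j
      · dsimp only
        rw [div_le_one hn0]
        exact_mod_cast hn
      · dsimp only; split <;> norm_num
    · rintro (_|i)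
      · simp only
        rw [Finset.sum_const, Finset.card_univ, Fintype.card_fin, nsmul_eq_mul]
        rw [mul_one_div, div_self hnne]
      · simp
    · intro j
      rw [Fintype.sum_option, Fintype.sum_option]
      simp only [Finset.sum_ite_eq', Finset.mem_univ, if_true]
      have heq : (1 + (n:ℝ) * ε) * (1 / n) = 1 / n + ε := by field_simp
      rw [heq]
      simp
    · rw [Fintype.sum_option]
      have h1 : ∑ j : Fin n, (1 + (n:ℝ) * ε) * (1 / n) = 1 + n * ε := by
        rw [Finset.sum_const, Finset.card_univ, Fintype.card_fin, nsmul_eq_mul]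
        field_simp
      have h2 : ∀ i : Fin n, ∑ j : Fin n,
          (if i = j then (1:ℝ) - ε else 0) * (if i = j then 1 else 0) = 1 - ε := by
        intro i
        rw [Finset.sum_eq_single i]
        · simp
        · intro b _ hb; simp [Ne.symm hb]
        · simp
      simp only [h1, h2]
      rw [Finset.sum_const, Finset.card_univ, Fintype.card_fin, nsmul_eq_mul]
      nlinarith
  · intro x h01 hitem hbud
    have hx0 : ∀ i j, 0 ≤ x i j := by
      intro i j; rcases h01 i j with h | h <;> simp [h]
    have hkey : ∀ j : Fin n, x (some j) j ≤ x none j := by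
      intro j
      have hb := hbud j
      rw [Fintype.sum_option, Fintype.sum_option] at hb
      have hsum : x (some j) j ≤ ∑ i : Fin n, x (some i) j :=
        Finset.single_le_sum (fun i _ => hx0 (some i) j) (Finset.mem_univ j)
      have hv : ∑ i : Fin n, (if i = j then (1:ℝ) - ε else 0) * x (some i) j
          = (1 - ε) * x (some j) j := by
        rw [Finset.sum_eq_single j]
        · simp
        · intro b _ hb; simp [hb]
        · simp
      simp only [hv] at hb
      have h3 : x (some j) j ≤ n * x none j := by nlinarith
      rcases h01 none j with h | h
      · rcases h01 (some j) j with h' | h' <;> nlinarith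
      · rcases h01 (some j) j with h' | h' <;> nlinarith
    rw [Fintype.sum_option]
    have h1 : ∑ j : Fin n, (1 + (n:ℝ) * ε) * x none j ≤ 1 + n * ε := by
      rw [← Finset.mul_sum]
      have := hitem none
      nlinarith [mul_pos hn0 hε]
    have h2 : ∀ i : Fin n, ∑ j : Fin n,
        (if i = j then (1:ℝ) - ε else 0) * x (some i) j = (1 - ε) * x (some i) i := by
      intro i
      rw [Finset.sum_eq_single i]
      · simp
      · intro b _ hb; simp [Ne.symm hb]
      · simp
    simp only [h2]
    have h3 : ∑ i : Fin n, (1 - ε) * x (some i) i ≤ 1 - ε := by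
      rw [← Finset.mul_sum]
      have hs : ∑ i : Fin n, x (some i) i ≤ ∑ i : Fin n, x none i :=
        Finset.sum_le_sum (fun i _ => hkey i)
      have := hitem none
      nlinarith
    nlinarith
end

section
/- (Large-deficit edges are negligible) Let x be a feasible Bundle-LP solution and β ∈ (0,1]. For each bundle (j,p), let L^β_{jp} be the set of N-items i with ρ_j − v_{ij} > β·(v_{pj} − ρ_j). Then sum_{j,p} sum_{i ∈ L^β_{jp}} v_{ij}·x_{ijp} ≤ (1/β)·sum_{j,p} v_{pj}·x_{pjp}. -/
open scoped Classical in
/-- Large-deficit edges are negligible: for a feasible Bundle-LP solution `x`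
and `β ∈ (0,1]`, the LP value contributed by N-items whose deficit exceeds a
`β` fraction of the bundle's excess is at most `1/β` times the LP value of the
P-edges. -/
theorem stmt_12 {I J : Type*} [Fintype I] [Fintype J]
    (v : I → J → ℝ) (ρ : J → ℝ) (β : ℝ)
    (hβ0 : 0 < β) (hβ1 : β ≤ 1)
    (hρ : ∀ j, 0 ≤ ρ j)
    (P : I → Prop)
    (hNval : ∀ i j, ¬ P i → 0 ≤ v i j ∧ v i j < ρ j)
    (hPval : ∀ p j, P p → ρ j ≤ v p j)
    (x : I → J → I → ℝ)
    (hx0 : ∀ i j p, 0 ≤ x i j p)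
    (hcons : ∀ j p, P p → ∑ i, (ρ j - v i j) * x i j p ≤ 0)
    (hsupp : ∀ i j p, ¬ P p → x i j p = 0)
    (hsupp' : ∀ p' j p, P p' → p' ≠ p → x p' j p = 0) :
    ∑ j, ∑ p, ∑ i ∈ Finset.univ.filter
        (fun i => ¬ P i ∧ β * (v p j - ρ j) < ρ j - v i j),
      v i j * x i j p ≤
    (1 / β) * ∑ j, ∑ p ∈ Finset.univ.filter (fun p => P p), v p j * x p j p := by
  have key : ∀ j p, ∑ i ∈ Finset.univ.filter
      (fun i => ¬ P i ∧ β * (v p j - ρ j) < ρ j - v i j), v i j * x i j p ≤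
      if P p then (1 / β) * (v p j * x p j p) else 0 := by
    intro j p
    by_cases hp : P p
    · simp only [hp, if_true]
      set L := Finset.univ.filter
        (fun i => ¬ P i ∧ β * (v p j - ρ j) < ρ j - v i j) with hL
      have hpL : p ∉ L := by simp [hL, hp]
      have hvpρ : ρ j ≤ v p j := hPval p j hp
      have hnn : ∀ i ∈ L, 0 ≤ (ρ j - v i j) * x i j p := by
        intro i hi
        rw [hL, Finset.mem_filter] at hi
        have h1 := hi.2.2
        have h2 : (0:ℝ) ≤ β * (v p j - ρ j) := by
          have := mul_nonneg hβ0.le (sub_nonneg.mpr hvpρ)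
          linarith
        exact mul_nonneg (by linarith) (hx0 i j p)
      -- bound the deficit sum over L by the excess of the P-edge
      have hS : ∑ i ∈ L, (ρ j - v i j) * x i j p ≤ (v p j - ρ j) * x p j p := by
        have h1 : ∑ i ∈ L, (ρ j - v i j) * x i j p ≤
            ∑ i ∈ Finset.univ.erase p, (ρ j - v i j) * x i j p := by
          apply Finset.sum_le_sum_of_subset_of_nonneg
          · intro i hi
            exact Finset.mem_erase.2 ⟨fun h => hpL (h ▸ hi), Finset.mem_univ i⟩
          · intro i hie hiL
            by_cases hPi : P i
            · have hip : i ≠ p := (Finset.mem_erase.1 hie).1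
              rw [hsupp' i j p hPi hip, mul_zero]
            · have h := hNval i j hPi
              exact mul_nonneg (by linarith [h.2]) (hx0 i j p)
        have h2 : ∑ i ∈ Finset.univ.erase p, (ρ j - v i j) * x i j p =
            (∑ i, (ρ j - v i j) * x i j p) - (ρ j - v p j) * x p j p :=
          Finset.sum_erase_eq_sub (Finset.mem_univ p)
        have h3 := hcons j p hp
        rw [h2] at h1
        linarith
      rcases eq_or_lt_of_le hvpρ with heq | hlt
      · -- v p j = ρ j : all large-deficit edges vanish
        have hall : ∀ i ∈ L, (ρ j - v i j) * x i j p = 0 := by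
          have hS0 : ∑ i ∈ L, (ρ j - v i j) * x i j p ≤ 0 := by
            rw [← heq] at hS; simpa using hS
          intro i hi
          have := (Finset.sum_eq_zero_iff_of_nonneg hnn).1
            (le_antisymm hS0 (Finset.sum_nonneg hnn)) i hi
          exact this
        have hT : ∑ i ∈ L, v i j * x i j p = 0 := by
          apply Finset.sum_eq_zero
          intro i hi
          have h0 := hall i hi
          rw [hL, Finset.mem_filter] at hi
          have hpos : 0 < ρ j - v i j := by
            have := hi.2.2
            rw [← heq] at this
            simpa using this
          have hx : x i j p = 0 := by
            rcases mul_eq_zero.1 h0 with h | h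
            · exact absurd h (ne_of_gt hpos)
            · exact h
          rw [hx, mul_zero]
        rw [hT]
        have : 0 ≤ v p j * x p j p :=
          mul_nonneg (le_trans (hρ j) hvpρ) (hx0 p j p)
        positivity
      · -- ρ j < v p j
        have hTnn : 0 ≤ ∑ i ∈ L, v i j * x i j p := by
          apply Finset.sum_nonneg
          intro i hi
          rw [hL, Finset.mem_filter] at hi
          exact mul_nonneg (hNval i j hi.2.1).1 (hx0 i j p)
        have hmain : β * (v p j - ρ j) * (∑ i ∈ L, v i j * x i j p) ≤
            ρ j * ((v p j - ρ j) * x p j p) := by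
          rw [Finset.mul_sum]
          calc ∑ i ∈ L, β * (v p j - ρ j) * (v i j * x i j p)
              ≤ ∑ i ∈ L, ρ j * ((ρ j - v i j) * x i j p) := by
                apply Finset.sum_le_sum
                intro i hi
                rw [hL, Finset.mem_filter] at hi
                have hN := hNval i j hi.2.1
                have hdef := hi.2.2
                have hxnn := hx0 i j p
                have ha : β * (v p j - ρ j) * (v i j * x i j p) ≤
                    (ρ j - v i j) * (v i j * x i j p) :=
                  mul_le_mul_of_nonneg_right hdef.le (mul_nonneg hN.1 hxnn)
                have hb : 0 ≤ (ρ j - v i j) * x i j p :=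
                  mul_nonneg (by linarith [hN.2]) hxnn
                have hc : v i j * ((ρ j - v i j) * x i j p) ≤
                    ρ j * ((ρ j - v i j) * x i j p) :=
                  mul_le_mul_of_nonneg_right hN.2.le hb
                nlinarith [ha, hc]
            _ = ρ j * ∑ i ∈ L, (ρ j - v i j) * x i j p := by
                rw [Finset.mul_sum]
            _ ≤ ρ j * ((v p j - ρ j) * x p j p) := by
                exact mul_le_mul_of_nonneg_left hS (hρ j)
        have hxp := hx0 p j p
        have hρj := hρ j
        have h4 : β * (∑ i ∈ L, v i j * x i j p) ≤ v p j * x p j p := by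
          have h5 : (v p j - ρ j) * (β * ∑ i ∈ L, v i j * x i j p) ≤
              (v p j - ρ j) * (ρ j * x p j p) := by linear_combination hmain
          have h6 := le_of_mul_le_mul_left h5 (sub_pos.mpr hlt)
          have h7 : ρ j * x p j p ≤ v p j * x p j p :=
            mul_le_mul_of_nonneg_right hlt.le hxp
          linarith
        calc ∑ i ∈ L, v i j * x i j p
            = (1 / β) * (β * ∑ i ∈ L, v i j * x i j p) := by
              field_simp
          _ ≤ (1 / β) * (v p j * x p j p) :=
              mul_le_mul_of_nonneg_left h4 (by positivity)
    · simp only [hp, if_false]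
      apply le_of_eq
      apply Finset.sum_eq_zero
      intro i _
      rw [hsupp i j p hp, mul_zero]
  calc ∑ j, ∑ p, ∑ i ∈ Finset.univ.filter
        (fun i => ¬ P i ∧ β * (v p j - ρ j) < ρ j - v i j), v i j * x i j p
      ≤ ∑ j, ∑ p, if P p then (1 / β) * (v p j * x p j p) else 0 := by
        apply Finset.sum_le_sum
        intro j _
        exact Finset.sum_le_sum (fun p _ => key j p)
    _ = (1 / β) * ∑ j, ∑ p ∈ Finset.univ.filter (fun p => P p),
          v p j * x p j p := by
        rw [Finset.mul_sum]
        apply Finset.sum_congr rfl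
        intro j _
        rw [Finset.sum_filter, Finset.mul_sum]
        apply Finset.sum_congr rfl
        intro p _
        by_cases hp : P p <;> simp [hp]
end

section
/- (Approximation ratio bound of offline rounding) Let α, β ∈ (0,1) with α < 1−β, and set γ = α(1−α)(1 − α/(1−β)). Suppose a randomized algorithm, given a feasible Bundle-LP solution x, allocates each P-item p to bundle jp with probability exactly x_{pjp}, and allocates each small-deficit N-item i to bundle jp with probability at least γ·x_{ijp}, while large-deficit contributions satisfy sum_{j,p} sum_{i ∈ L^β_{jp}} v_{ij} x_{ijp} ≤ (1/β) sum_{j,p} v_{pj} x_{pjp}. Then its expected value is at least min{1 − γ/β, γ} times the LP objective value sum_{i,j,p} v_{ij} x_{ijp}. -/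
open scoped Classical in
/-- Approximation ratio of the offline rounding: if a randomized algorithm
allocates each P-item `p` to bundle `jp` with probability exactly `x_{pjp}`,
allocates each small-deficit N-item to bundle `jp` with probability at least
`γ·x_{ijp}` where `γ = α(1-α)(1-α/(1-β))`, and the large-deficit contribution
is at most `(1/β)·∑ v_{pj} x_{pjp}`, then its expected value is at least
`min{1 - γ/β, γ}` times the LP objective. -/
theorem stmt_13 {I J : Type*} [Fintype I] [Fintype J]
    (v : I → J → ℝ) (ρ : J → ℝ)
    (hv : ∀ i j, 0 ≤ v i j) (hρ : ∀ j, 0 ≤ ρ j)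
    (α β γ : ℝ) (hα0 : 0 < α) (hα1 : α < 1) (hβ0 : 0 < β) (hβ1 : β < 1)
    (hαβ : α < 1 - β)
    (hγ : γ = α * (1 - α) * (1 - α / (1 - β)))
    (P : I → Prop)
    (hNval : ∀ i j, ¬ P i → v i j < ρ j)
    (hPval : ∀ p j, P p → ρ j ≤ v p j)
    (x : I → J → I → ℝ)
    (hx0 : ∀ i j p, 0 ≤ x i j p)
    (hsupp : ∀ i j p, ¬ P p → x i j p = 0)
    (hsupp' : ∀ p' j p, P p' → p' ≠ p → x p' j p = 0)
    -- `q i j p` : probability the algorithm allocates item `i` to bundle `jp`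
    (q : I → J → I → ℝ)
    (hq0 : ∀ i j p, 0 ≤ q i j p)
    (hqsupp : ∀ i j p, ¬ P p → q i j p = 0)
    (hqsupp' : ∀ p' j p, P p' → p' ≠ p → q p' j p = 0)
    (hqP : ∀ p j, P p → q p j p = x p j p)
    (hqN : ∀ i j p, ¬ P i → P p → ρ j - v i j ≤ β * (v p j - ρ j) →
      γ * x i j p ≤ q i j p)
    (hlarge : ∑ j, ∑ p, ∑ i ∈ Finset.univ.filter
        (fun i => ¬ P i ∧ β * (v p j - ρ j) < ρ j - v i j),
      v i j * x i j p ≤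
      (1 / β) * ∑ j, ∑ p ∈ Finset.univ.filter (fun p => P p), v p j * x p j p) :
    min (1 - γ / β) γ * (∑ i, ∑ j, ∑ p, v i j * x i j p) ≤
      ∑ i, ∑ j, ∑ p, v i j * q i j p := by
  classical
  have h1β : 0 < 1 - β := by linarith
  have hγ0 : 0 < γ := by
    have hlt : α / (1 - β) < 1 := (div_lt_one h1β).mpr (by linarith)
    rw [hγ]
    exact mul_pos (mul_pos hα0 (by linarith)) (by linarith)
  set A := ∑ j, ∑ p ∈ Finset.univ.filter (fun p => P p), v p j * x p j p with hAdef
  set L := ∑ j, ∑ p, ∑ i ∈ Finset.univ.filter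
      (fun i => ¬ P i ∧ β * (v p j - ρ j) < ρ j - v i j),
    v i j * x i j p with hLdef
  set N := ∑ i ∈ Finset.univ.filter (fun i => ¬ P i), ∑ j, ∑ p, v i j * x i j p with hNdef
  have hA0 : 0 ≤ A := by
    rw [hAdef]
    exact Finset.sum_nonneg fun j _ => Finset.sum_nonneg fun p _ =>
      mul_nonneg (hv _ _) (hx0 _ _ _)
  have hN0 : 0 ≤ N := by
    rw [hNdef]
    exact Finset.sum_nonneg fun i _ => Finset.sum_nonneg fun j _ =>
      Finset.sum_nonneg fun p _ => mul_nonneg (hv _ _) (hx0 _ _ _)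
  have hPq : ∀ y : I → J → I → ℝ, (∀ p' j p, P p' → p' ≠ p → y p' j p = 0) →
      (∀ p j, P p → y p j p = x p j p) →
      ∑ i ∈ Finset.univ.filter (fun i => P i), ∑ j, ∑ p, v i j * y i j p = A := by
    intro y hy hy'
    have hAc : A = ∑ p ∈ Finset.univ.filter (fun p => P p), ∑ j, v p j * x p j p := by
      rw [hAdef]; exact Finset.sum_comm
    rw [hAc]
    refine Finset.sum_congr rfl fun i hi => ?_
    have hPi : P i := (Finset.mem_filter.mp hi).2
    refine Finset.sum_congr rfl fun j _ => ?_
    rw [Finset.sum_eq_single i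
      (fun p _ hp => by rw [hy i j p hPi (fun h => hp h.symm), mul_zero])
      (fun h => absurd (Finset.mem_univ i) h)]
    rw [hy' i j hPi]
  have hsplitx : (∑ i, ∑ j, ∑ p, v i j * x i j p) = A + N := by
    rw [← Finset.sum_filter_add_sum_filter_not Finset.univ (fun i => P i),
      hPq x hsupp' (fun p j _ => rfl), hNdef]
  have hsplitq : A + (∑ i ∈ Finset.univ.filter (fun i => ¬ P i), ∑ j, ∑ p, v i j * q i j p)
      = ∑ i, ∑ j, ∑ p, v i j * q i j p := by
    rw [← Finset.sum_filter_add_sum_filter_not Finset.univ (fun i => P i),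
      hPq q hqsupp' hqP]
  have hL : L = ∑ i ∈ Finset.univ.filter (fun i => ¬ P i), ∑ j, ∑ p,
      (if β * (v p j - ρ j) < ρ j - v i j then v i j * x i j p else 0) := by
    rw [hLdef]
    calc ∑ j, ∑ p, ∑ i ∈ Finset.univ.filter
          (fun i => ¬ P i ∧ β * (v p j - ρ j) < ρ j - v i j), v i j * x i j p
        = ∑ j, ∑ p, ∑ i ∈ Finset.univ.filter (fun i => ¬ P i),
            (if β * (v p j - ρ j) < ρ j - v i j then v i j * x i j p else 0) := by
          refine Finset.sum_congr rfl fun j _ => Finset.sum_congr rfl fun p _ => ?_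
          rw [← Finset.filter_filter, Finset.sum_filter]
      _ = ∑ j, ∑ i ∈ Finset.univ.filter (fun i => ¬ P i), ∑ p,
            (if β * (v p j - ρ j) < ρ j - v i j then v i j * x i j p else 0) := by
          exact Finset.sum_congr rfl fun j _ => Finset.sum_comm
      _ = ∑ i ∈ Finset.univ.filter (fun i => ¬ P i), ∑ j, ∑ p,
            (if β * (v p j - ρ j) < ρ j - v i j then v i j * x i j p else 0) :=
          Finset.sum_comm
  have hNbound : γ * N - γ * L ≤ ∑ i ∈ Finset.univ.filter (fun i => ¬ P i),
      ∑ j, ∑ p, v i j * q i j p := by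
    rw [hL, hNdef, Finset.mul_sum, Finset.mul_sum, ← Finset.sum_sub_distrib]
    refine Finset.sum_le_sum fun i hi => ?_
    have hPi : ¬ P i := (Finset.mem_filter.mp hi).2
    rw [Finset.mul_sum, Finset.mul_sum, ← Finset.sum_sub_distrib]
    refine Finset.sum_le_sum fun j _ => ?_
    rw [Finset.mul_sum, Finset.mul_sum, ← Finset.sum_sub_distrib]
    refine Finset.sum_le_sum fun p _ => ?_
    by_cases hp : P p
    · by_cases hlg : β * (v p j - ρ j) < ρ j - v i j
      · rw [if_pos hlg]
        have := mul_nonneg (hv i j) (hq0 i j p)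
        linarith
      · rw [if_neg hlg]
        have h := hqN i j p hPi hp (le_of_not_gt hlg)
        have h2 := mul_le_mul_of_nonneg_left h (hv i j)
        have h3 : γ * (v i j * x i j p) = v i j * (γ * x i j p) := by ring
        linarith
    · rw [hsupp i j p hp, hqsupp i j p hp]
      simp
  have hLA : γ * L ≤ γ / β * A := by
    have h := mul_le_mul_of_nonneg_left hlarge (le_of_lt hγ0)
    calc γ * L ≤ γ * (1 / β * A) := h
      _ = γ / β * A := by ring
  have hmin1 : min (1 - γ / β) γ ≤ 1 - γ / β := min_le_left _ _
  have hmin2 : min (1 - γ / β) γ ≤ γ := min_le_right _ _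
  calc min (1 - γ / β) γ * (∑ i, ∑ j, ∑ p, v i j * x i j p)
      = min (1 - γ / β) γ * A + min (1 - γ / β) γ * N := by rw [hsplitx]; ring
    _ ≤ (1 - γ / β) * A + γ * N :=
        add_le_add (mul_le_mul_of_nonneg_right hmin1 hA0)
          (mul_le_mul_of_nonneg_right hmin2 hN0)
    _ = A - γ / β * A + γ * N := by ring
    _ ≤ A - γ * L + γ * N := by linarith
    _ = A + (γ * N - γ * L) := by ring
    _ ≤ A + (∑ i ∈ Finset.univ.filter (fun i => ¬ P i), ∑ j, ∑ p, v i j * q i j p) := by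
        linarith
    _ = ∑ i, ∑ j, ∑ p, v i j * q i j p := hsplitq
end

section
/- (Max-Coverage reduction gap) Given a balanced set system with n elements and m sets, each of size n/k, construct the unit-ρ AVA instance with m buyers (one per set), k choice items of value 1 + (ε/2)·(n/k) for every buyer, and n element items where the item for element e has value 1 − ε/2 for buyers whose set contains e and zero otherwise. Then: (a) if there exist k sets covering all n elements with each element covered exactly once, the AVA optimum is at least n + k; (b) if no k sets cover more than n(1 − 1/e + δ) elements, the AVA optimum is at most k + n(1 − 1/e + δ) + nε/2. -/
/-!
(a) Give the `k` choice items to the `k` sets of the exact cover and every element item to the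
unique chosen set containing it. A chosen buyer then holds one choice item with excess
`(ε/2)(n/k)` and `n/k` element items of deficit `ε/2` each, so it breaks even; the welfare is
`k (1 + (ε/2)(n/k)) + n (1 - ε/2) = n + k`.

(b) An element item is worth less than `1`, so a buyer holding one must also hold an item worth
more than `1`, i.e. a choice item. Hence at most `k` buyers receive element items, every element
item of positive value lies in the union of their sets, and is worth at most `1`; the choice
items add at most `k (1 + (ε/2)(n/k)) = k + nε/2`.
-/

/-- Values of the AVA instance built from a balanced set system: `k` choice
items of value `1 + (ε/2)(n/k)` for every buyer, and `n` element items, the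
item of element `e` having value `1 - ε/2` exactly for buyers whose set
contains `e`. -/
noncomputable def mcVal (n m k : ℕ) (ε : ℝ) (S : Fin m → Finset (Fin n)) :
    (Fin k ⊕ Fin n) → Fin m → ℝ :=
  fun it b =>
    Sum.elim (fun _ => 1 + ε / 2 * ((n : ℝ) / k))
      (fun e => if e ∈ S b then 1 - ε / 2 else 0) it

/-- Unit-`ρ` AVA feasibility. -/
def mcFeasible {α : Type*} [Fintype α] [DecidableEq α] {m : ℕ}
    (w : α → Fin m → ℝ) (x : α → Option (Fin m)) : Prop :=
  ∀ b : Fin m, ((Finset.univ.filter fun a => x a = some b).card : ℝ) ≤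
    ∑ a ∈ Finset.univ.filter fun a => x a = some b, w a b

/-- Welfare of an allocation. -/
noncomputable def mcValue {α : Type*} [Fintype α] {m : ℕ}
    (w : α → Fin m → ℝ) (x : α → Option (Fin m)) : ℝ :=
  ∑ a, ((x a).map (w a)).getD 0

open Finset

section Allocation

variable {α : Type*} [Fintype α] [DecidableEq α] {m : ℕ} {w : α → Fin m → ℝ}
  {x : α → Option (Fin m)}

theorem mcFeasible_iff_sum_sub_one_nonneg :
    mcFeasible w x ↔ ∀ b, 0 ≤ ∑ a ∈ univ.filter (fun a => x a = some b), (w a b - 1) := by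
  simp only [mcFeasible, sum_sub_distrib, sum_const, nsmul_eq_mul, mul_one, sub_nonneg]

theorem mcFeasible.exists_one_lt (hx : mcFeasible w x) {a : α} {b : Fin m}
    (hab : x a = some b) (hlt : w a b < 1) : ∃ a', x a' = some b ∧ 1 < w a' b := by
  by_contra! hle
  have hnonneg := mcFeasible_iff_sum_sub_one_nonneg.mp hx b
  have hneg : ∑ a ∈ univ.filter (fun a => x a = some b), (w a b - 1) < 0 :=
    sum_neg' (fun a' ha' => by linarith [hle a' (mem_filter.mp ha').2])
      ⟨a, mem_filter.mpr ⟨mem_univ a, hab⟩, by linarith⟩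
  linarith

end Allocation

theorem card_filter_exists_eq_some_le {ι β : Type*} [Fintype ι] [Fintype β] [DecidableEq β]
    (y : ι → Option β) [DecidablePred fun b => ∃ i, y i = some b] :
    #{b | ∃ i, y i = some b} ≤ Fintype.card ι :=
  calc #{b | ∃ i, y i = some b}
      = #((univ.filter fun b => ∃ i, y i = some b).map .some) := (card_map _).symm
    _ ≤ #(univ.image y) := card_le_card fun o ho => by
        obtain ⟨b, hb, rfl⟩ := mem_map.mp ho
        obtain ⟨i, hi⟩ := (mem_filter.mp hb).2
        exact mem_image.mpr ⟨i, mem_univ i, hi⟩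
    _ ≤ Fintype.card ι := card_image_le

section Reduction

variable {n m k : ℕ} {ε : ℝ} {S : Fin m → Finset (Fin n)}

@[simp]
theorem mcVal_inl (i : Fin k) (b : Fin m) :
    mcVal n m k ε S (.inl i) b = 1 + ε / 2 * (n / k) := rfl

@[simp]
theorem mcVal_inr (e : Fin n) (b : Fin m) :
    mcVal n m k ε S (.inr e) b = if e ∈ S b then 1 - ε / 2 else 0 := rfl

theorem mcVal_inr_lt_one (hε : 0 < ε) (e : Fin n) (b : Fin m) :
    mcVal n m k ε S (.inr e) b < 1 := by
  rw [mcVal_inr]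
  split_ifs <;> linarith

theorem mcFeasible.exists_inl_of_inr (hε : 0 < ε) {x : Fin k ⊕ Fin n → Option (Fin m)}
    (hx : mcFeasible (mcVal n m k ε S) x) {e : Fin n} {b : Fin m} (he : x (.inr e) = some b) :
    ∃ i, x (.inl i) = some b := by
  obtain ⟨a, ha, hlt⟩ := hx.exists_one_lt he (mcVal_inr_lt_one hε e b)
  cases a with
  | inl i => exact ⟨i, ha⟩
  | inr e' => exact absurd hlt (mcVal_inr_lt_one hε e' b).not_gt

theorem mcFeasible.card_filter_exists_inr_le (hε : 0 < ε) {x : Fin k ⊕ Fin n → Option (Fin m)}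
    (hx : mcFeasible (mcVal n m k ε S) x) : #{b | ∃ e, x (.inr e) = some b} ≤ k :=
  calc #{b | ∃ e, x (.inr e) = some b}
      ≤ #{b | ∃ i, x (.inl i) = some b} :=
        card_le_card fun b hb => by
          simp only [mem_filter, mem_univ, true_and] at hb ⊢
          exact hx.exists_inl_of_inr hε hb.choose_spec
    _ ≤ k := by simpa using card_filter_exists_eq_some_le fun i => x (.inl i)

theorem mcValue_mcVal_le (hε : 0 ≤ ε) (x : Fin k ⊕ Fin n → Option (Fin m)) :
    mcValue (mcVal n m k ε S) x ≤
      k * (1 + ε / 2 * (n / k)) +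
        #((univ.filter fun b => ∃ e, x (.inr e) = some b).biUnion S) := by
  set B := univ.filter fun b => ∃ e, x (.inr e) = some b
  have hchoice : ∀ i : Fin k,
      ((x (.inl i)).map (mcVal n m k ε S (.inl i))).getD 0 ≤ 1 + ε / 2 * (n / k) := by
    intro i
    cases x (.inl i) <;> simp only [Option.map_none, Option.getD_none, Option.map_some,
      Option.getD_some, mcVal_inl, le_refl]
    positivity
  have helement : ∀ e : Fin n,
      ((x (.inr e)).map (mcVal n m k ε S (.inr e))).getD 0 ≤ if e ∈ B.biUnion S then 1 else 0 := by
    intro e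
    cases he : x (.inr e) with
    | none => simp only [Option.map_none, Option.getD_none]; positivity
    | some b =>
      simp only [Option.map_some, Option.getD_some, mcVal_inr]
      split_ifs with hS hB hB
      · linarith
      · exact absurd (mem_biUnion.mpr ⟨b, mem_filter.mpr ⟨mem_univ b, e, he⟩, hS⟩) hB
      · positivity
      · rfl
  calc mcValue (mcVal n m k ε S) x
      ≤ ∑ _i : Fin k, (1 + ε / 2 * (n / k)) + ∑ e : Fin n, if e ∈ B.biUnion S then 1 else 0 := by
        rw [mcValue, Fintype.sum_sum_type]
        exact add_le_add (sum_le_sum fun i _ => hchoice i) (sum_le_sum fun e _ => helement e)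
    _ = k * (1 + ε / 2 * (n / k)) + #(B.biUnion S) := by
        rw [sum_const, card_univ, Fintype.card_fin, nsmul_eq_mul, sum_boole, filter_mem_eq_inter,
          univ_inter]

end Reduction

section ExactCover

variable {n m k : ℕ} {ε : ℝ} {S : Fin m → Finset (Fin n)} {T : Finset (Fin m)}
  {σ : Fin k → Fin m} {τ : Fin n → Fin m}

theorem mcFeasible_sumElim_of_exactCover (hε : 0 ≤ ε) (hbal : ∀ b, (#(S b) : ℝ) = n / k)
    (hσ : Set.range σ = T) (hτ : ∀ e b, τ e = b ↔ b ∈ T ∧ e ∈ S b) :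
    mcFeasible (mcVal n m k ε S) fun a => some (Sum.elim σ τ a) := by
  rw [mcFeasible_iff_sum_sub_one_nonneg]
  intro b
  rw [sum_filter, Fintype.sum_sum_type]
  simp only [Sum.elim_inl, Sum.elim_inr, Option.some_inj, mcVal_inl, mcVal_inr,
    add_sub_cancel_left]
  have hchoice : ∀ i, 0 ≤ if σ i = b then ε / 2 * (n / k) else 0 := fun _ => by positivity
  by_cases hb : b ∈ T
  · obtain ⟨i, rfl⟩ : b ∈ Set.range σ := hσ ▸ hb
    have hσi : ε / 2 * (n / k) ≤ ∑ i', if σ i' = σ i then ε / 2 * (n / k) else 0 := by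
      simpa using single_le_sum (fun i' _ => hchoice i') (mem_univ i)
    have helement :
        ∑ e, (if τ e = σ i then (if e ∈ S (σ i) then 1 - ε / 2 else 0) - 1 else 0)
          = -(ε / 2 * (n / k)) :=
      calc _ = ∑ e, if e ∈ S (σ i) then -(ε / 2) else 0 := sum_congr rfl fun e _ => by
              by_cases he : e ∈ S (σ i) <;> simp [hτ, hb, he]
        _ = -(ε / 2 * (n / k)) := by
              rw [sum_ite_mem, univ_inter, sum_const, nsmul_eq_mul, hbal]
              ring
    linarith
  · have helement : ∑ e, (if τ e = b then (if e ∈ S b then 1 - ε / 2 else 0) - 1 else 0) = 0 :=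
      sum_eq_zero fun e _ => if_neg fun he => hb ((hτ e b).mp he).1
    rw [helement, add_zero]
    exact sum_nonneg fun i _ => hchoice i

theorem mcValue_sumElim_of_exactCover (hk : k ≠ 0) (hτ : ∀ e, e ∈ S (τ e)) :
    mcValue (mcVal n m k ε S) (fun a => some (Sum.elim σ τ a)) = n + k := by
  simp only [mcValue, Fintype.sum_sum_type, Option.map_some, Option.getD_some, Sum.elim_inl,
    Sum.elim_inr, mcVal_inl, mcVal_inr, hτ, if_true, sum_const, card_univ, Fintype.card_fin,
    nsmul_eq_mul]
  field_simp
  ring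

end ExactCover

theorem stmt_14_general (n m k : ℕ) (hk : 0 < k)
    (ε δ : ℝ) (hε0 : 0 < ε)
    (S : Fin m → Finset (Fin n))
    (hbal : ∀ b, ((S b).card : ℝ) = (n : ℝ) / k) :
    ((∃ T : Finset (Fin m), T.card = k ∧ ∀ e : Fin n, ∃! b, b ∈ T ∧ e ∈ S b) →
      ∃ x : (Fin k ⊕ Fin n) → Option (Fin m),
        mcFeasible (mcVal n m k ε S) x ∧
        (n : ℝ) + k ≤ mcValue (mcVal n m k ε S) x) ∧
    ((∀ T : Finset (Fin m), T.card ≤ k →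
        ((T.biUnion S).card : ℝ) ≤ n * (1 - 1 / Real.exp 1 + δ)) →
      ∀ x : (Fin k ⊕ Fin n) → Option (Fin m),
        mcFeasible (mcVal n m k ε S) x →
        mcValue (mcVal n m k ε S) x ≤
          k + n * (1 - 1 / Real.exp 1 + δ) + n * ε / 2) := by
  refine ⟨fun ⟨T, hTc, hcover⟩ => ?_, fun hcov x hx => ?_⟩
  · choose τ hτ using fun e => (hcover e).exists
    have hτT : ∀ e b, τ e = b ↔ b ∈ T ∧ e ∈ S b := fun e b =>
      ⟨by rintro rfl; exact hτ e, fun hb => (hcover e).unique (hτ e) hb⟩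
    exact ⟨fun a => some (Sum.elim (T.orderEmbOfFin hTc) τ a),
      mcFeasible_sumElim_of_exactCover hε0.le hbal (T.range_orderEmbOfFin hTc) hτT,
      (mcValue_sumElim_of_exactCover hk.ne' fun e => (hτ e).2).ge⟩
  · have hchoice : (k : ℝ) * (1 + ε / 2 * (n / k)) = k + n * ε / 2 := by
      field_simp
    calc mcValue (mcVal n m k ε S) x
        ≤ k * (1 + ε / 2 * (n / k)) +
            #((univ.filter fun b => ∃ e, x (.inr e) = some b).biUnion S) :=
          mcValue_mcVal_le hε0.le x
      _ ≤ k + n * ε / 2 + n * (1 - 1 / Real.exp 1 + δ) := by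
          rw [hchoice]
          gcongr
          exact hcov _ (hx.card_filter_exists_inr_le hε0)
      _ = k + n * (1 - 1 / Real.exp 1 + δ) + n * ε / 2 := by ring

/-- The Max-Coverage reduction gap: (a) an exact cover by `k` sets yields an
AVA solution of value at least `n + k`; (b) if no `k` sets cover more than
`n(1 - 1/e + δ)` elements, every feasible AVA solution has value at most
`k + n(1 - 1/e + δ) + nε/2`. -/
theorem stmt_14 (n m k : ℕ) (hn : 0 < n) (hk : 0 < k) (hkm : k ≤ m)
    (ε δ : ℝ) (hε0 : 0 < ε) (hε1 : ε < 1) (hδ : 0 ≤ δ)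
    (S : Fin m → Finset (Fin n))
    (hbal : ∀ b, ((S b).card : ℝ) = (n : ℝ) / k) :
    ((∃ T : Finset (Fin m), T.card = k ∧ ∀ e : Fin n, ∃! b, b ∈ T ∧ e ∈ S b) →
      ∃ x : (Fin k ⊕ Fin n) → Option (Fin m),
        mcFeasible (mcVal n m k ε S) x ∧
        (n : ℝ) + k ≤ mcValue (mcVal n m k ε S) x) ∧
    ((∀ T : Finset (Fin m), T.card ≤ k →
        ((T.biUnion S).card : ℝ) ≤ n * (1 - 1 / Real.exp 1 + δ)) →
      ∀ x : (Fin k ⊕ Fin n) → Option (Fin m),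
        mcFeasible (mcVal n m k ε S) x →
        mcValue (mcVal n m k ε S) x ≤
          k + n * (1 - 1 / Real.exp 1 + δ) + n * ε / 2) :=
  stmt_14_general n m k hk ε δ hε0 S hbal
end

section
/- (Independent-set structure in the GenAVA clique reduction) Given a graph G = (V,E), construct the GenAVA instance with a buyer j_v per vertex (ρ_{j_v} = 1), a vertex item i_v of cost M + deg(v) with value M for j_v and 0 otherwise, and an edge item i_e per edge e of cost 0 with value 1 for both endpoints' buyers and 0 otherwise, where M = 2|E|/n^ε. Then in any feasible allocation, the set U of vertices v whose buyer receives the vertex item i_v is an independent set in G; conversely, for any independent set U there is a feasible allocation allocating i_v to j_v for all v ∈ U and all edge items to some buyer. Consequently the optimal value equals α(G)·M + |E|, where α(G) is the independence number. -/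
open scoped Classical

/-- Items of the GenAVA clique-reduction instance: a vertex item per vertex and
an edge item per edge of `G`. -/
abbrev cliqueItem (n : ℕ) (G : SimpleGraph (Fin n)) [DecidableRel G.Adj] :=
  Fin n ⊕ {e : Sym2 (Fin n) // e ∈ G.edgeFinset}

/-- Value of an item for a buyer: vertex item `i_v` has value `M` for buyer
`j_v` and `0` otherwise; edge item `i_e` has value `1` for the buyers of the
endpoints of `e` and `0` otherwise. -/
noncomputable def cliqueVal (n : ℕ) (G : SimpleGraph (Fin n)) [DecidableRel G.Adj]
    (M : ℝ) : cliqueItem n G → Fin n → ℝ :=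
  fun it b =>
    Sum.elim (fun u => if b = u then M else 0)
      (fun e => if b ∈ (e : Sym2 (Fin n)) then 1 else 0) it

/-- Cost of an item: vertex item `i_v` costs `M + deg(v)`, edge items cost 0. -/
noncomputable def cliqueCost (n : ℕ) (G : SimpleGraph (Fin n)) [DecidableRel G.Adj]
    (M : ℝ) : cliqueItem n G → ℝ :=
  fun it => Sum.elim (fun u => M + (G.degree u : ℝ)) (fun _ => 0) it

/-- GenAVA feasibility with `ρ_j = 1`: each buyer's allocated value is at least
their allocated cost. -/
def cliqueFeasible (n : ℕ) (G : SimpleGraph (Fin n)) [DecidableRel G.Adj] (M : ℝ)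
    (x : cliqueItem n G → Option (Fin n)) : Prop :=
  ∀ b : Fin n,
    ∑ it ∈ Finset.univ.filter fun it => x it = some b, cliqueCost n G M it ≤
    ∑ it ∈ Finset.univ.filter fun it => x it = some b, cliqueVal n G M it b

/-- Welfare of an allocation. -/
noncomputable def cliqueValue (n : ℕ) (G : SimpleGraph (Fin n)) [DecidableRel G.Adj]
    (M : ℝ) (x : cliqueItem n G → Option (Fin n)) : ℝ :=
  ∑ it, ((x it).map (cliqueVal n G M it)).getD 0

/-!
Buyer `j_v` pays `M + deg v` for its vertex item but values it at only `M`, and edge items are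
free, so to meet its budget it must also collect all `deg v` edge items at `v`, each worth `1`
to it. Two adjacent served buyers would both need their common edge item, hence the served
vertices form an independent set. Conversely, for an independent set `U`, giving every edge item
to its endpoint in `U` (if there is one) balances every budget of `U` exactly. The welfare of an
allocation is `M` per served vertex plus at most `1` per edge item, with equality for these
allocations, which gives the optimum `α(G) · M + |E|`.
-/

open Finset

variable {n : ℕ} {G : SimpleGraph (Fin n)} [DecidableRel G.Adj] {M : ℝ}

@[simp] lemma cliqueVal_inl (u b : Fin n) : cliqueVal n G M (.inl u) b = if b = u then M else 0 :=
  rfl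

@[simp] lemma cliqueVal_inr (e : {e // e ∈ G.edgeFinset}) (b : Fin n) :
    cliqueVal n G M (.inr e) b = if b ∈ e.1 then 1 else 0 :=
  rfl

@[simp] lemma cliqueCost_inl (u : Fin n) : cliqueCost n G M (.inl u) = M + G.degree u := rfl

@[simp] lemma cliqueCost_inr (e : {e // e ∈ G.edgeFinset}) : cliqueCost n G M (.inr e) = 0 := rfl

lemma card_filter_mem_edge_eq_degree (u : Fin n) :
    #{e : {e // e ∈ G.edgeFinset} | u ∈ e.1} = G.degree u := by
  rw [← G.card_incidenceFinset_eq_degree, G.incidenceFinset_eq_filter]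
  exact card_bij (fun e _ => e.1) (by simp) (by simp) (by simp +contextual)

lemma cliqueFeasible_iff {x : cliqueItem n G → Option (Fin n)} :
    cliqueFeasible n G M x ↔ ∀ b,
      ∑ w with x (.inl w) = some b, (M + G.degree w) ≤
        (if x (.inl b) = some b then M else 0) +
          #{e : {e // e ∈ G.edgeFinset} | x (.inr e) = some b ∧ b ∈ e.1} := by
  refine forall_congr' fun b => ?_
  have hvertex : ∑ w, (if x (.inl w) = some b then (if b = w then M else 0) else 0) =
      if x (.inl b) = some b then M else 0 := by
    rw [Fintype.sum_eq_single b fun w hw => by simp [Ne.symm hw]]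
    simp
  simp only [sum_filter, Fintype.sum_sum_type, cliqueCost_inl, cliqueCost_inr,
    cliqueVal_inl, cliqueVal_inr, hvertex, ite_self, sum_const_zero, add_zero, card_filter,
    Nat.cast_sum, Nat.cast_ite, Nat.cast_one, Nat.cast_zero, ite_and]

lemma cliqueValue_eq (x : cliqueItem n G → Option (Fin n)) :
    cliqueValue n G M x = #{w | x (.inl w) = some w} * M +
      #{e : {e // e ∈ G.edgeFinset} | ∃ b ∈ e.1, x (.inr e) = some b} := by
  simp only [cliqueValue, Fintype.sum_sum_type, card_filter, Nat.cast_sum, sum_mul]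
  congr 1 <;> refine sum_congr rfl fun i _ => ?_
  · cases h : x (.inl i) <;> simp [eq_comm]
  · cases h : x (.inr i) <;> simp

lemma eq_some_of_mem_of_cliqueFeasible (hM : 0 ≤ M) {x : cliqueItem n G → Option (Fin n)}
    (hx : cliqueFeasible n G M x) {u : Fin n} (hu : x (.inl u) = some u)
    {e : {e // e ∈ G.edgeFinset}} (he : u ∈ e.1) : x (.inr e) = some u := by
  have hcost : M + G.degree u ≤ ∑ w with x (.inl w) = some u, (M + G.degree w) :=
    single_le_sum (f := fun w => M + (G.degree w : ℝ)) (fun w _ => by positivity) (by simp [hu])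
  have hbudget := cliqueFeasible_iff.1 hx u
  rw [if_pos hu] at hbudget
  have hdeg : (G.degree u : ℝ) ≤
      #{e : {e // e ∈ G.edgeFinset} | x (.inr e) = some u ∧ u ∈ e.1} := by
    linarith
  by_contra hne
  have hlt : #{e : {e // e ∈ G.edgeFinset} | x (.inr e) = some u ∧ u ∈ e.1} <
      #{e : {e // e ∈ G.edgeFinset} | u ∈ e.1} :=
    card_lt_card ⟨fun e => by simp +contextual,
      fun hsub => hne (mem_filter.1 (hsub (by simpa using he))).2.1⟩
  rw [card_filter_mem_edge_eq_degree] at hlt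
  exact absurd hdeg (by exact_mod_cast hlt.not_ge)

lemma not_adj_of_cliqueFeasible (hM : 0 ≤ M) {x : cliqueItem n G → Option (Fin n)}
    (hx : cliqueFeasible n G M x) {u v : Fin n} (hu : x (.inl u) = some u)
    (hv : x (.inl v) = some v) : ¬ G.Adj u v := fun hadj =>
  let e : {e // e ∈ G.edgeFinset} := ⟨s(u, v), G.mem_edgeFinset.2 hadj⟩
  G.ne_of_adj hadj <| Option.some_injective _ <|
    (eq_some_of_mem_of_cliqueFeasible hM hx hu (e := e) (Sym2.mem_mk_left u v)).symm.trans
      (eq_some_of_mem_of_cliqueFeasible hM hx hv (e := e) (Sym2.mem_mk_right u v))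

lemma cliqueValue_le (hM : 0 ≤ M) {x : cliqueItem n G → Option (Fin n)}
    (hx : cliqueFeasible n G M x) {a : ℕ}
    (ha : ∀ U : Finset (Fin n), (∀ u ∈ U, ∀ w ∈ U, ¬ G.Adj u w) → #U ≤ a) :
    cliqueValue n G M x ≤ a * M + #G.edgeFinset := by
  have hserved : #{w | x (.inl w) = some w} ≤ a :=
    ha _ fun u hu w hw => not_adj_of_cliqueFeasible hM hx (mem_filter.1 hu).2 (mem_filter.1 hw).2
  have hedges : #{e : {e // e ∈ G.edgeFinset} | ∃ b ∈ e.1, x (.inr e) = some b} ≤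
      #G.edgeFinset :=
    (card_filter_le _ _).trans (by simp)
  rw [cliqueValue_eq]
  gcongr

noncomputable def cliqueEdgeOwner (U : Finset (Fin n)) (e : Sym2 (Fin n)) : Fin n :=
  if h : ∃ u ∈ U, u ∈ e then h.choose else e.out.1

lemma cliqueEdgeOwner_mem (U : Finset (Fin n)) (e : Sym2 (Fin n)) : cliqueEdgeOwner U e ∈ e := by
  unfold cliqueEdgeOwner
  split_ifs with h
  · exact h.choose_spec.2
  · exact e.out_fst_mem

lemma cliqueEdgeOwner_eq {U : Finset (Fin n)} (hU : ∀ u ∈ U, ∀ w ∈ U, ¬ G.Adj u w)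
    {u : Fin n} {e : Sym2 (Fin n)} (hu : u ∈ U) (hue : u ∈ e) (he : e ∈ G.edgeFinset) :
    cliqueEdgeOwner U e = u := by
  have h : ∃ v ∈ U, v ∈ e := ⟨u, hu, hue⟩
  rw [cliqueEdgeOwner, dif_pos h]
  by_contra hne
  obtain ⟨hvU, hve⟩ := h.choose_spec
  rw [(Sym2.mem_and_mem_iff hne).1 ⟨hve, hue⟩, G.mem_edgeFinset, SimpleGraph.mem_edgeSet] at he
  exact hU _ hvU _ hu he

variable (G) in
noncomputable def cliqueAlloc (U : Finset (Fin n)) : cliqueItem n G → Option (Fin n) :=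
  Sum.elim (fun w => if w ∈ U then some w else none) (fun e => some (cliqueEdgeOwner U e.1))

@[simp] lemma cliqueAlloc_inl (U : Finset (Fin n)) (w : Fin n) :
    cliqueAlloc G U (.inl w) = if w ∈ U then some w else none :=
  rfl

lemma cliqueAlloc_feasible {U : Finset (Fin n)}
    (hU : ∀ u ∈ U, ∀ w ∈ U, ¬ G.Adj u w) : cliqueFeasible n G M (cliqueAlloc G U) := by
  rw [cliqueFeasible_iff]
  intro b
  by_cases hb : b ∈ U
  · have hvertex : ({w | cliqueAlloc G U (.inl w) = some b} : Finset (Fin n)) = {b} := by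
      ext w; by_cases hw : w ∈ U <;> aesop
    have hedge : ({e | cliqueAlloc G U (.inr e) = some b ∧ b ∈ e.1} :
        Finset {e // e ∈ G.edgeFinset}) = ({e | b ∈ e.1} : Finset {e // e ∈ G.edgeFinset}) :=
      filter_congr fun (e : {e // e ∈ G.edgeFinset}) _ =>
        and_iff_right_of_imp fun hbe => congrArg some (cliqueEdgeOwner_eq hU hb hbe e.2)
    rw [hvertex, hedge, sum_singleton, card_filter_mem_edge_eq_degree, cliqueAlloc_inl, if_pos hb,
      if_pos rfl]
  · have hvertex : ({w | cliqueAlloc G U (.inl w) = some b} : Finset (Fin n)) = ∅ := by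
      ext w; by_cases hw : w ∈ U <;> aesop
    rw [hvertex, sum_empty]
    simp [hb]

lemma cliqueValue_cliqueAlloc (U : Finset (Fin n)) :
    cliqueValue n G M (cliqueAlloc G U) = #U * M + #G.edgeFinset := by
  have hvertex : ({w | cliqueAlloc G U (.inl w) = some w} : Finset (Fin n)) = U := by
    ext w; by_cases hw : w ∈ U <;> simp [hw]
  have hedge : ({e | ∃ b ∈ e.1, cliqueAlloc G U (.inr e) = some b} :
      Finset {e // e ∈ G.edgeFinset}) = univ :=
    filter_true_of_mem fun e _ => ⟨_, cliqueEdgeOwner_mem U e.1, rfl⟩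
  rw [cliqueValue_eq, hvertex, hedge, card_univ, Fintype.card_coe]

theorem stmt_15_general (n : ℕ) (G : SimpleGraph (Fin n)) [DecidableRel G.Adj]
    (ε M : ℝ)
    (hM : M = 2 * (G.edgeFinset.card : ℝ) / (n : ℝ) ^ ε)
    (a : ℕ)
    (hmax : IsGreatest {c : ℕ | ∃ U : Finset (Fin n),
      (∀ u ∈ U, ∀ w ∈ U, ¬ G.Adj u w) ∧ U.card = c} a) :
    (∀ x : cliqueItem n G → Option (Fin n), cliqueFeasible n G M x →
      ∀ u v : Fin n, x (Sum.inl u) = some u → x (Sum.inl v) = some v →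
        ¬ G.Adj u v) ∧
    (∀ U : Finset (Fin n), (∀ u ∈ U, ∀ w ∈ U, ¬ G.Adj u w) →
      ∃ x : cliqueItem n G → Option (Fin n), cliqueFeasible n G M x ∧
        (∀ u ∈ U, x (Sum.inl u) = some u) ∧
        (∀ e, (x (Sum.inr e)).isSome)) ∧
    (∀ x : cliqueItem n G → Option (Fin n), cliqueFeasible n G M x →
      cliqueValue n G M x ≤ a * M + (G.edgeFinset.card : ℝ)) ∧
    (∃ x : cliqueItem n G → Option (Fin n), cliqueFeasible n G M x ∧
      cliqueValue n G M x = a * M + (G.edgeFinset.card : ℝ)) := by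
  have hM0 : 0 ≤ M := hM ▸ by positivity
  obtain ⟨⟨U, hU, rfl⟩, hUmax⟩ := hmax
  exact ⟨fun x hx u v => not_adj_of_cliqueFeasible hM0 hx,
    fun U hU =>
      ⟨cliqueAlloc G U, cliqueAlloc_feasible hU, fun u hu => by simp [hu], fun _ => rfl⟩,
    fun x hx => cliqueValue_le hM0 hx fun U hU => hUmax ⟨U, hU, rfl⟩,
    cliqueAlloc G U, cliqueAlloc_feasible hU, cliqueValue_cliqueAlloc U⟩

/-- Independent-set structure in the GenAVA clique reduction: (1) in any
feasible allocation, vertices whose buyer receives their vertex item form an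
independent set; (2) conversely, any independent set induces a feasible
allocation serving those vertex items and all edge items; hence (3)–(4) the
optimal welfare equals `α(G)·M + |E|`. -/
theorem stmt_15 (n : ℕ) (hn : 0 < n) (G : SimpleGraph (Fin n)) [DecidableRel G.Adj]
    (ε M : ℝ) (hε : 0 < ε)
    (hM : M = 2 * (G.edgeFinset.card : ℝ) / (n : ℝ) ^ ε)
    (a : ℕ)
    (hmax : IsGreatest {c : ℕ | ∃ U : Finset (Fin n),
      (∀ u ∈ U, ∀ w ∈ U, ¬ G.Adj u w) ∧ U.card = c} a) :
    (∀ x : cliqueItem n G → Option (Fin n), cliqueFeasible n G M x →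
      ∀ u v : Fin n, x (Sum.inl u) = some u → x (Sum.inl v) = some v →
        ¬ G.Adj u v) ∧
    (∀ U : Finset (Fin n), (∀ u ∈ U, ∀ w ∈ U, ¬ G.Adj u w) →
      ∃ x : cliqueItem n G → Option (Fin n), cliqueFeasible n G M x ∧
        (∀ u ∈ U, x (Sum.inl u) = some u) ∧
        (∀ e, (x (Sum.inr e)).isSome)) ∧
    (∀ x : cliqueItem n G → Option (Fin n), cliqueFeasible n G M x →
      cliqueValue n G M x ≤ a * M + (G.edgeFinset.card : ℝ)) ∧
    (∃ x : cliqueItem n G → Option (Fin n), cliqueFeasible n G M x ∧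
      cliqueValue n G M x = a * M + (G.edgeFinset.card : ℝ)) :=
  stmt_15_general n G ε M hM a hmax
end
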